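/- arXiv:2209.14978 — 6 statements merged into one kernel-verified Lean document; each statement's English description precedes it below -/
import Mathlib

section
/- Let d, n be positive integers, let λ_0,…,λ_{n−1} be nonempty subsets of {0,…,d−1}, and let S_i ⊆ λ_i be nonempty subsets. The Minkowski sum F = F_0 + ⋯ + F_{n−1} is an exposed face of the polytope P = Δ_{λ_0} + ⋯ + Δ_{λ_{n−1}} if and only if the configuration is acyclic, i.e. the transitive closure of the relation ⇝ is irreflexive. -/
open Pointwise

def mkGood {d : ℕ} (T : Finset (Fin d)) (z : Fin d → ℝ) : Prop :=
  (∀ a, 0 ≤ z a) ∧ (∀ a, a ∉ T → z a = 0) ∧ ∑ a, z a = 1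

theorem good_single {d : ℕ} {T : Finset (Fin d)} {a : Fin d} (ha : a ∈ T) :
    mkGood T (Pi.single a (1 : ℝ)) := by
  refine ⟨fun b => ?_, fun b hb => ?_, ?_⟩
  · rcases eq_or_ne b a with rfl | h
    · simp
    · simp [Pi.single_apply, h]
  · have h : b ≠ a := fun h => hb (h ▸ ha)
    simp [Pi.single_apply, h]
  · simp [Pi.single_apply]

theorem conv_desc {d : ℕ} (T : Finset (Fin d)) :
    convexHull ℝ {v : Fin d → ℝ | ∃ a ∈ T, v = Pi.single a (1 : ℝ)} = {x | mkGood T x} := by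
  apply le_antisymm
  · apply convexHull_min
    · rintro v ⟨a, ha, rfl⟩
      exact good_single ha
    · rintro x ⟨hx0, hxT, hx1⟩ y ⟨hy0, hyT, hy1⟩ s t hs ht hst
      refine ⟨fun a => add_nonneg (mul_nonneg hs (hx0 a)) (mul_nonneg ht (hy0 a)),
        fun a ha => by simp [hxT a ha, hyT a ha], ?_⟩
      simp only [Pi.add_apply, Pi.smul_apply, smul_eq_mul]
      rw [Finset.sum_add_distrib, ← Finset.mul_sum, ← Finset.mul_sum, hx1, hy1]
      simpa using hst
  · rintro x ⟨hx0, hxT, hx1⟩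
    have hsum : ∑ a ∈ T, x a = 1 := by
      rw [← hx1]
      exact Finset.sum_subset (Finset.subset_univ T) (fun a _ ha => hxT a ha)
    have hmem := T.centerMass_mem_convexHull (s := {v : Fin d → ℝ | ∃ a ∈ T, v = Pi.single a (1 : ℝ)}) (w := x) (z := fun a => Pi.single a (1:ℝ))
      (fun i _ => hx0 i) (by rw [hsum]; norm_num)
      (fun i hi => Set.mem_setOf.2 ⟨i, hi, rfl⟩)
    have hcm : T.centerMass x (fun a => Pi.single a (1:ℝ)) = x := by
      rw [Finset.centerMass, hsum]
      simp only [inv_one, one_smul]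
      funext b
      simp only [Finset.sum_apply, Pi.smul_apply, Pi.single_apply, smul_eq_mul, mul_ite,
        mul_one, mul_zero]
      rw [Finset.sum_ite_eq T b x]
      by_cases hb : b ∈ T
      · rw [if_pos hb]
      · rw [if_neg hb, hxT b hb]
    rwa [hcm] at hmem

theorem memSum_iff {d n : ℕ} (A : Fin n → Finset (Fin d)) (x : Fin d → ℝ) :
    (x ∈ ∑ i : Fin n, convexHull ℝ {v : Fin d → ℝ | ∃ a ∈ A i, v = Pi.single a (1 : ℝ)}) ↔
      ∃ y : Fin n → Fin d → ℝ, (∀ i, mkGood (A i) (y i)) ∧ ∑ i, y i = x := by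
  rw [Set.mem_fintype_sum]
  constructor
  · rintro ⟨g, hg, rfl⟩
    refine ⟨g, fun i => ?_, rfl⟩
    have := hg i
    rwa [conv_desc] at this
  · rintro ⟨y, hy, rfl⟩
    exact ⟨y, fun i => by rw [conv_desc]; exact hy i, rfl⟩

theorem sum_le_of_good {d : ℕ} {T : Finset (Fin d)} {z : Fin d → ℝ} (hz : mkGood T z)
    {w : Fin d → ℝ} {c : ℝ} (hw : ∀ a ∈ T, w a ≤ c) : ∑ a, w a * z a ≤ c :=
  calc ∑ a, w a * z a ≤ ∑ a, c * z a := by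
        apply Finset.sum_le_sum
        intro a _
        by_cases ha : a ∈ T
        · exact mul_le_mul_of_nonneg_right (hw a ha) (hz.1 a)
        · rw [hz.2.1 a ha]; simp
    _ = c := by rw [← Finset.mul_sum, hz.2.2, mul_one]

theorem sum_eq_of_good {d : ℕ} {T : Finset (Fin d)} {z : Fin d → ℝ} (hz : mkGood T z)
    {w : Fin d → ℝ} {c : ℝ} (hw : ∀ a ∈ T, w a = c) : ∑ a, w a * z a = c :=
  calc ∑ a, w a * z a = ∑ a, c * z a := Finset.sum_congr rfl fun a _ => by
        by_cases ha : a ∈ T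
        · rw [hw a ha]
        · rw [hz.2.1 a ha]; ring
    _ = c := by rw [← Finset.mul_sum, hz.2.2, mul_one]

theorem good_of_eq {d : ℕ} {T U : Finset (Fin d)} {z : Fin d → ℝ}
    (hz : mkGood T z) {w : Fin d → ℝ} {c : ℝ} (hle : ∀ a ∈ T, w a ≤ c)
    (hlt : ∀ a ∈ T, a ∉ U → w a < c) (heq : ∑ a, w a * z a = c) : mkGood U z := by
  refine ⟨hz.1, fun b hb => ?_, hz.2.2⟩
  by_cases hbT : b ∈ T
  · have h0 : ∑ a, (c - w a) * z a = 0 := by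
      have h1 : ∑ a, (c - w a) * z a = c * (∑ a, z a) - ∑ a, w a * z a := by
        rw [Finset.mul_sum, ← Finset.sum_sub_distrib]
        exact Finset.sum_congr rfl fun a _ => by ring
      rw [h1, hz.2.2, heq, mul_one, sub_self]
    have hnn : ∀ a ∈ Finset.univ, 0 ≤ (c - w a) * z a := by
      intro a _
      by_cases ha : a ∈ T
      · exact mul_nonneg (sub_nonneg.2 (hle a ha)) (hz.1 a)
      · rw [hz.2.1 a ha]; simp
    have hzero := (Finset.sum_eq_zero_iff_of_nonneg hnn).1 h0 b (Finset.mem_univ b)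
    have hpos : 0 < c - w b := sub_pos.2 (hlt b hbT hb)
    exact (mul_eq_zero.1 hzero).resolve_left (ne_of_gt hpos)
  · exact hz.2.1 b hbT

theorem ell_eval {d : ℕ} (ℓ : (Fin d → ℝ) →ₗ[ℝ] ℝ) (x : Fin d → ℝ) :
    ℓ x = ∑ a, ℓ (Pi.single a 1) * x a := by
  rw [LinearMap.pi_apply_eq_sum_univ]
  apply Finset.sum_congr rfl
  intro a _
  rw [smul_eq_mul, mul_comm]
  congr 2
  funext j
  simp [Pi.single_apply, eq_comm]

/-- The Minkowski sum `F = F_0 + ⋯ + F_{n-1}` of faces of the simplices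
`Δ_{λ_0}, …, Δ_{λ_{n-1}}` is an exposed face of `P = Δ_{λ_0} + ⋯ + Δ_{λ_{n-1}}` if and only if
the associated configuration is acyclic. -/
theorem minkowski_sum_isExposedFace_iff_acyclic
    (d n : ℕ) (hd : 0 < d) (hn : 0 < n)
    (lam S : Fin n → Finset (Fin d))
    (hlam : ∀ i, (lam i).Nonempty)
    (hS : ∀ i, S i ⊆ lam i)
    (hSne : ∀ i, (S i).Nonempty)
    (P F : Set (Fin d → ℝ))
    (hP : P = ∑ i : Fin n,
      convexHull ℝ {v : Fin d → ℝ | ∃ a ∈ lam i, v = Pi.single a (1 : ℝ)})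
    (hF : F = ∑ i : Fin n,
      convexHull ℝ {v : Fin d → ℝ | ∃ a ∈ S i, v = Pi.single a (1 : ℝ)}) :
    (∃ ℓ : (Fin d → ℝ) →ₗ[ℝ] ℝ, F = {x ∈ P | ∀ y ∈ P, ℓ y ≤ ℓ x}) ↔
      ¬ ∃ a : Fin d,
        Relation.TransGen
          (fun a b : Fin d => ∃ a' b' : Fin d, ∃ i : Fin n,
            Relation.EqvGen (fun x y : Fin d => ∃ i, x ∈ S i ∧ y ∈ S i) a' a ∧
            Relation.EqvGen (fun x y : Fin d => ∃ i, x ∈ S i ∧ y ∈ S i) b' b ∧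
            a' ∈ S i ∧ b' ∈ lam i ∧ b' ∉ S i)
          a a := by
  classical
  have memP : ∀ x, x ∈ P ↔ ∃ y : Fin n → Fin d → ℝ,
      (∀ i, mkGood (lam i) (y i)) ∧ ∑ i, y i = x := fun x => by rw [hP]; exact memSum_iff lam x
  have memF : ∀ x, x ∈ F ↔ ∃ y : Fin n → Fin d → ℝ,
      (∀ i, mkGood (S i) (y i)) ∧ ∑ i, y i = x := fun x => by rw [hF]; exact memSum_iff S x
  set Esim : Fin d → Fin d → Prop :=
    Relation.EqvGen (fun x y : Fin d => ∃ i, x ∈ S i ∧ y ∈ S i) with hEsim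
  set Wrel : Fin d → Fin d → Prop := fun a b : Fin d => ∃ a' b' : Fin d, ∃ i : Fin n,
      Esim a' a ∧ Esim b' b ∧ a' ∈ S i ∧ b' ∈ lam i ∧ b' ∉ S i with hWrel
  have c0 : ∀ j, ∃ a, a ∈ S j := fun j => hSne j
  choose c hcS using c0
  constructor
  · rintro ⟨ℓ, hℓ⟩ ⟨a₀, hcyc⟩
    set w : Fin d → ℝ := fun a => ℓ (Pi.single a 1) with hw
    have hptP : ∀ g : Fin n → Fin d, (∀ j, g j ∈ lam j) →
        (∑ j, Pi.single (g j) (1:ℝ)) ∈ P := by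
      intro g hg
      exact (memP _).2 ⟨fun j => Pi.single (g j) 1, fun j => good_single (hg j), rfl⟩
    have hptF : ∀ g : Fin n → Fin d, (∀ j, g j ∈ S j) →
        (∑ j, Pi.single (g j) (1:ℝ)) ∈ F := by
      intro g hg
      exact (memF _).2 ⟨fun j => Pi.single (g j) 1, fun j => good_single (hg j), rfl⟩
    have hptval : ∀ g : Fin n → Fin d, ℓ (∑ j, Pi.single (g j) (1:ℝ)) = ∑ j, w (g j) := by
      intro g
      rw [map_sum]
    have hsplit : ∀ (i : Fin n) (v : Fin d),
        ∑ j, w (Function.update c i v j) = w v + ∑ j ∈ Finset.univ.erase i, w (c j) := by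
      intro i v
      rw [← Finset.add_sum_erase _ _ (Finset.mem_univ i), Function.update_self]
      congr 1
      exact Finset.sum_congr rfl fun j hj => by
        rw [Function.update_of_ne (Finset.ne_of_mem_erase hj)]
    have H1 : ∀ i, ∀ a ∈ S i, ∀ b ∈ lam i, w b ≤ w a := by
      intro i a ha b hb
      have hgS : ∀ j, Function.update c i a j ∈ S j := by
        intro j
        rcases eq_or_ne j i with rfl | hj
        · rwa [Function.update_self]
        · rw [Function.update_of_ne hj]; exact hcS j
      have hg'lam : ∀ j, Function.update c i b j ∈ lam j := by
        intro j
        rcases eq_or_ne j i with rfl | hj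
        · rwa [Function.update_self]
        · rw [Function.update_of_ne hj]; exact hS j (hcS j)
      have hgF := hptF _ hgS
      rw [hℓ] at hgF
      have hle := hgF.2 _ (hptP _ hg'lam)
      rw [hptval, hptval, hsplit, hsplit] at hle
      linarith
    have H2 : ∀ i, ∀ a ∈ S i, ∀ b ∈ lam i, b ∉ S i → w b < w a := by
      intro i a ha b hb hbS
      rcases lt_or_eq_of_le (H1 i a ha b hb) with h | h
      · exact h
      exfalso
      set g : Fin n → Fin d := Function.update c i a with hg
      set g' : Fin n → Fin d := fun j => if j = i ∨ b ∈ S j then b else c j with hg'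
      have hgS : ∀ j, g j ∈ S j := by
        intro j
        rcases eq_or_ne j i with rfl | hj
        · rw [hg, Function.update_self]; exact ha
        · rw [hg, Function.update_of_ne hj]; exact hcS j
      have hg'lam : ∀ j, g' j ∈ lam j := by
        intro j
        by_cases hj : j = i ∨ b ∈ S j
        · simp only [hg']; rw [if_pos hj]
          rcases hj with rfl | hj
          · exact hb
          · exact hS j hj
        · simp only [hg']; rw [if_neg hj]; exact hS j (hcS j)
      have hwg' : ∀ j, w (g' j) = w (g j) := by
        intro j
        by_cases hj : j = i ∨ b ∈ S j
        · have e1 : g' j = b := by simp only [hg']; rw [if_pos hj]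
          rw [e1]
          rcases eq_or_ne j i with rfl | hji
          · rw [hg, Function.update_self]; exact h
          · have hjb : b ∈ S j := hj.resolve_left hji
            rw [hg, Function.update_of_ne hji]
            exact le_antisymm (H1 j (c j) (hcS j) b (hS j hjb))
              (H1 j b hjb (c j) (hS j (hcS j)))
        · have hji : j ≠ i := fun e => hj (Or.inl e)
          have e1 : g' j = c j := by simp only [hg']; rw [if_neg hj]
          rw [e1, hg, Function.update_of_ne hji]
      have hzF : (∑ j, Pi.single (g' j) (1:ℝ)) ∈ F := by
        rw [hℓ]
        refine ⟨hptP g' hg'lam, fun y hy => ?_⟩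
        have h1 : ℓ y ≤ ℓ (∑ j, Pi.single (g j) 1) := by
          have := hptF g hgS
          rw [hℓ] at this
          exact this.2 y hy
        calc ℓ y ≤ ℓ (∑ j, Pi.single (g j) 1) := h1
          _ = ℓ (∑ j, Pi.single (g' j) 1) := by
            rw [hptval, hptval]
            exact (Finset.sum_congr rfl fun j _ => (hwg' j).symm)
      obtain ⟨y, hy, hysum⟩ := (memF _).1 hzF
      have hvb : ∀ j, (Pi.single (g' j) (1:ℝ) : Fin d → ℝ) b = if j = i ∨ b ∈ S j then (1:ℝ) else 0 := by
        intro j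
        by_cases hj : j = i ∨ b ∈ S j
        · rw [if_pos hj]
          have : g' j = b := by simp only [hg']; rw [if_pos hj]
          rw [this, Pi.single_eq_same]
        · rw [if_neg hj]
          have hne : b ≠ g' j := by
            have e1 : g' j = c j := by simp only [hg']; rw [if_neg hj]
            rw [e1]
            intro e
            exact hj (Or.inr (e ▸ hcS j))
          rw [Pi.single_eq_of_ne hne]
      have hcoord : ∑ j, y j b = ∑ j, (if j = i ∨ b ∈ S j then (1:ℝ) else 0) := by
        have := congrFun hysum b
        rw [Finset.sum_apply, Finset.sum_apply] at this
        rw [this]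
        exact Finset.sum_congr rfl fun j _ => hvb j
      have hub : ∀ j, y j b ≤ (if b ∈ S j then (1:ℝ) else 0) := by
        intro j
        by_cases hj : b ∈ S j
        · rw [if_pos hj]
          rw [← (hy j).2.2]
          exact Finset.single_le_sum (fun a _ => (hy j).1 a) (Finset.mem_univ b)
        · rw [if_neg hj]
          rw [(hy j).2.1 b hj]
      have hlt2 : ∑ j, (if b ∈ S j then (1:ℝ) else 0) <
          ∑ j, (if j = i ∨ b ∈ S j then (1:ℝ) else 0) := by
        apply Finset.sum_lt_sum
        · intro j _
          by_cases hj : b ∈ S j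
          · rw [if_pos hj, if_pos (Or.inr hj)]
          · rw [if_neg hj]
            split <;> norm_num
        · refine ⟨i, Finset.mem_univ i, ?_⟩
          rw [if_neg hbS, if_pos (Or.inl rfl)]
          norm_num
      have : ∑ j, y j b ≤ ∑ j, (if b ∈ S j then (1:ℝ) else 0) :=
        Finset.sum_le_sum fun j _ => hub j
      rw [hcoord] at this
      exact absurd (lt_of_lt_of_le hlt2 this) (lt_irrefl _)
    have Hconst : ∀ x y, Esim x y → w x = w y := by
      intro x y hxy
      induction hxy with
      | rel x y hxy =>
        obtain ⟨i, hx, hy⟩ := hxy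
        exact le_antisymm (H1 i y hy x (hS i hx)) (H1 i x hx y (hS i hy))
      | refl => rfl
      | symm _ _ _ ih => exact ih.symm
      | trans _ _ _ _ _ ih1 ih2 => exact ih1.trans ih2
    have Hstep : ∀ x y, Wrel x y → w y < w x := by
      rintro x y ⟨a', b', i, hEa, hEb, ha', hb'1, hb'2⟩
      calc w y = w b' := (Hconst _ _ hEb).symm
        _ < w a' := H2 i a' ha' b' hb'1 hb'2
        _ = w x := Hconst _ _ hEa
    have key : ∀ x y : Fin d, Relation.TransGen Wrel x y → w y < w x := by
      intro x y hxy
      induction hxy with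
      | single h => exact Hstep _ _ h
      | tail _ h ih => exact lt_trans (Hstep _ _ h) ih
    exact absurd (key _ _ hcyc) (lt_irrefl _)
  · intro hacyc
    have hirr : ∀ a, ¬ Relation.TransGen Wrel a a := fun a h => hacyc ⟨a, h⟩
    have hErefl : ∀ a, Esim a a := fun a => Relation.EqvGen.refl a
    have hWinv : ∀ a b a₂ b₂, Wrel a b → Esim a a₂ → Esim b b₂ → Wrel a₂ b₂ := by
      rintro a b a₂ b₂ ⟨a', b', i, hEa, hEb, h1, h2, h3⟩ ha hb
      exact ⟨a', b', i, Relation.EqvGen.trans _ _ _ hEa ha,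
        Relation.EqvGen.trans _ _ _ hEb hb, h1, h2, h3⟩
    have hTinv : ∀ a a₂ cc, Esim a a₂ → Relation.TransGen Wrel a cc →
        Relation.TransGen Wrel a₂ cc := by
      intro a a₂ cc hE hT
      obtain ⟨m, ham, hmc⟩ := Relation.TransGen.head'_iff.1 hT
      exact Relation.TransGen.head'_iff.2 ⟨m, hWinv a m a₂ m ham hE (hErefl m), hmc⟩
    set w : Fin d → ℝ := fun a =>
      ((Finset.univ.filter fun cc => Relation.TransGen Wrel a cc ∨ Esim a cc).card : ℝ) with hw
    have hWlt : ∀ a b, Wrel a b → w b < w a := by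
      intro a b hab
      have hsubset : (Finset.univ.filter fun cc => Relation.TransGen Wrel b cc ∨ Esim b cc) ⊆
          (Finset.univ.filter fun cc => Relation.TransGen Wrel a cc ∨ Esim a cc) := by
        intro cc hcc
        simp only [Finset.mem_filter, Finset.mem_univ, true_and] at hcc ⊢
        rcases hcc with h | h
        · exact Or.inl (Relation.TransGen.head hab h)
        · exact Or.inl (Relation.TransGen.single (hWinv a b a cc hab (hErefl a) h))
      have ha_in : a ∈ Finset.univ.filter fun cc =>
          Relation.TransGen Wrel a cc ∨ Esim a cc := by
        simp only [Finset.mem_filter, Finset.mem_univ, true_and]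
        exact Or.inr (hErefl a)
      have ha_notin : a ∉ Finset.univ.filter fun cc =>
          Relation.TransGen Wrel b cc ∨ Esim b cc := by
        simp only [Finset.mem_filter, Finset.mem_univ, true_and]
        rintro (h | h)
        · exact hirr a (Relation.TransGen.head hab h)
        · exact hirr a (Relation.TransGen.single (hWinv a b a a hab (hErefl a) h))
      have hss : (Finset.univ.filter fun cc => Relation.TransGen Wrel b cc ∨ Esim b cc) ⊂
          (Finset.univ.filter fun cc => Relation.TransGen Wrel a cc ∨ Esim a cc) :=
        (Finset.ssubset_iff_of_subset hsubset).2 ⟨a, ha_in, ha_notin⟩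
      exact_mod_cast Nat.cast_lt.2 (Finset.card_lt_card hss)
    have hEeq : ∀ a b, Esim a b → w a = w b := by
      intro a b hab
      have hset : (Finset.univ.filter fun cc => Relation.TransGen Wrel a cc ∨ Esim a cc) =
          (Finset.univ.filter fun cc => Relation.TransGen Wrel b cc ∨ Esim b cc) := by
        apply Finset.filter_congr
        intro cc _
        constructor
        · rintro (h | h)
          · exact Or.inl (hTinv a b cc hab h)
          · exact Or.inr (Relation.EqvGen.trans _ _ _ (Relation.EqvGen.symm _ _ hab) h)
        · rintro (h | h)
          · exact Or.inl (hTinv b a cc (Relation.EqvGen.symm _ _ hab) h)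
          · exact Or.inr (Relation.EqvGen.trans _ _ _ hab h)
      rw [hw]
      simp only
      rw [hset]
    have hSeq : ∀ i, ∀ a ∈ S i, ∀ b ∈ S i, w a = w b := fun i a ha b hb =>
      hEeq a b (Relation.EqvGen.rel a b ⟨i, ha, hb⟩)
    have hlt : ∀ i, ∀ a ∈ S i, ∀ b ∈ lam i, b ∉ S i → w b < w a := fun i a ha b hb hbS =>
      hWlt a b ⟨a, b, i, hErefl a, hErefl b, ha, hb, hbS⟩
    set μ : Fin n → ℝ := fun i => w (c i) with hμ
    have hwS : ∀ i, ∀ a ∈ S i, w a = μ i := fun i a ha => hSeq i a ha (c i) (hcS i)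
    have hwlam_le : ∀ i, ∀ a ∈ lam i, w a ≤ μ i := by
      intro i a ha
      by_cases haS : a ∈ S i
      · exact le_of_eq (hwS i a haS)
      · exact le_of_lt (hlt i (c i) (hcS i) a ha haS)
    have hwlam_lt : ∀ i, ∀ a ∈ lam i, a ∉ S i → w a < μ i := fun i a ha haS =>
      hlt i (c i) (hcS i) a ha haS
    refine ⟨∑ a : Fin d, w a • LinearMap.proj a, ?_⟩
    set ℓ : (Fin d → ℝ) →ₗ[ℝ] ℝ := ∑ a : Fin d, w a • LinearMap.proj a with hℓ
    have hℓval : ∀ x, ℓ x = ∑ a, w a * x a := by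
      intro x
      rw [hℓ]
      simp [LinearMap.sum_apply, LinearMap.smul_apply, LinearMap.proj_apply, smul_eq_mul]
    have hswap : ∀ u : Fin n → Fin d → ℝ, ℓ (∑ i, u i) = ∑ i, ℓ (u i) := fun u =>
      map_sum ℓ u Finset.univ
    have hval_le : ∀ i z, mkGood (lam i) z → ℓ z ≤ μ i := fun i z hz => by
      rw [hℓval]; exact sum_le_of_good hz (hwlam_le i)
    have hval_eq : ∀ i z, mkGood (S i) z → ℓ z = μ i := fun i z hz => by
      rw [hℓval]; exact sum_eq_of_good hz (hwS i)
    have hP_le : ∀ z ∈ P, ℓ z ≤ ∑ i, μ i := by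
      intro z hz
      obtain ⟨u, hu, rfl⟩ := (memP z).1 hz
      rw [hswap]
      exact Finset.sum_le_sum fun i _ => hval_le i (u i) (hu i)
    have hF_eq : ∀ z ∈ F, ℓ z = ∑ i, μ i := by
      intro z hz
      obtain ⟨u, hu, rfl⟩ := (memF z).1 hz
      rw [hswap]
      exact Finset.sum_congr rfl fun i _ => hval_eq i (u i) (hu i)
    have hFP : F ⊆ P := by
      intro z hz
      obtain ⟨u, hu, rfl⟩ := (memF z).1 hz
      exact (memP _).2 ⟨u, fun i => ⟨(hu i).1,
        fun a ha => (hu i).2.1 a fun hc => ha (hS i hc), (hu i).2.2⟩, rfl⟩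
    have hFne : F.Nonempty :=
      ⟨∑ j, Pi.single (c j) 1,
        (memF _).2 ⟨fun j => Pi.single (c j) 1, fun j => good_single (hcS j), rfl⟩⟩
    ext x
    simp only [Set.mem_setOf_eq]
    constructor
    · intro hx
      exact ⟨hFP hx, fun z hz => (hP_le z hz).trans (hF_eq x hx).ge⟩
    · rintro ⟨hxP, hmax⟩
      obtain ⟨x0, hx0⟩ := hFne
      have h1 : ℓ x = ∑ i, μ i := by
        refine le_antisymm (hP_le x hxP) ?_
        have := hmax x0 (hFP hx0)
        rwa [hF_eq x0 hx0] at this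
      obtain ⟨u, hu, rfl⟩ := (memP x).1 hxP
      rw [hswap] at h1
      have h2 := (Finset.sum_eq_sum_iff_of_le fun i _ => hval_le i (u i) (hu i)).1 h1
      refine (memF _).2 ⟨u, fun i => ?_, rfl⟩
      refine good_of_eq (hu i) (hwlam_le i) (hwlam_lt i) ?_
      rw [← hℓval]
      exact h2 i (Finset.mem_univ i)
end

section
/- Let d, n be positive integers, let λ_0,…,λ_{n−1} be nonempty subsets of {0,…,d−1}, and let S_i ⊆ λ_i be nonempty subsets. If the configuration is acyclic (the transitive closure of ⇝ is irreflexive), then the dimension of the face F = F_0 + ⋯ + F_{n−1} of P satisfies finrank ℝ (vectorSpan ℝ F) = d − c, where c is the number of equivalence classes of the equivalence relation ∼ on {0,…,d−1}. -/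
open Pointwise

/-- If the configuration is acyclic, the dimension of the face
`F = F_0 + ⋯ + F_{n-1}` of `P` equals `d − c`, where `c` is the number of equivalence classes of
the equivalence relation `∼` on `{0,…,d−1}` generated by `a ∼ b` whenever `a, b ∈ S_i`. -/
theorem minkowski_sum_face_dim_of_acyclic
    (d n : ℕ) (hd : 0 < d) (hn : 0 < n)
    (lam S : Fin n → Finset (Fin d))
    (hlam : ∀ i, (lam i).Nonempty)
    (hS : ∀ i, S i ⊆ lam i)
    (hSne : ∀ i, (S i).Nonempty)
    (F : Set (Fin d → ℝ))
    (hF : F = ∑ i : Fin n,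
      convexHull ℝ {v : Fin d → ℝ | ∃ a ∈ S i, v = Pi.single a (1 : ℝ)})
    (hacyc : ¬ ∃ a : Fin d,
      Relation.TransGen
        (fun a b : Fin d => ∃ a' b' : Fin d, ∃ i : Fin n,
          Relation.EqvGen (fun x y : Fin d => ∃ i, x ∈ S i ∧ y ∈ S i) a' a ∧
          Relation.EqvGen (fun x y : Fin d => ∃ i, x ∈ S i ∧ y ∈ S i) b' b ∧
          a' ∈ S i ∧ b' ∈ lam i ∧ b' ∉ S i)
        a a) :
    Module.finrank ℝ (vectorSpan ℝ F) =
      d - Nat.card (Quot (fun x y : Fin d => ∃ i, x ∈ S i ∧ y ∈ S i)) := by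
  classical
  set R : Fin d → Fin d → Prop := fun x y => ∃ i, x ∈ S i ∧ y ∈ S i with hRdef
  set G : Set (Fin d → ℝ) :=
    {v | ∃ a b : Fin d, R a b ∧ v = Pi.single a 1 - Pi.single b 1} with hGdef
  set V : Submodule ℝ (Fin d → ℝ) := Submodule.span ℝ G with hVdef
  -- differences along the generated equivalence relation lie in V
  have hEqv : ∀ a b : Fin d, Relation.EqvGen R a b →
      Pi.single a (1:ℝ) - Pi.single b 1 ∈ V := by
    intro a b h
    induction h with
    | rel x y hxy => exact Submodule.subset_span ⟨x, y, hxy, rfl⟩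
    | refl x => simp
    | symm x y _ ih => simpa using V.neg_mem ih
    | trans x y z _ _ ih1 ih2 => simpa using V.add_mem ih1 ih2
  haveI : Fintype (Quot R) := Fintype.ofSurjective (Quot.mk R) Quot.mk_surjective
  -- the linear map summing coordinates over equivalence classes
  set φ : (Fin d → ℝ) →ₗ[ℝ] ((Quot R) → ℝ) :=
    { toFun := fun f q => ∑ a ∈ Finset.univ.filter (fun a => Quot.mk R a = q), f a
      map_add' := by intro f g; funext q; simp [Finset.sum_add_distrib]
      map_smul' := by intro c f; funext q; simp [Finset.mul_sum] } with hφdef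
  have hφsingle : ∀ a : Fin d,
      φ (Pi.single a 1) = Pi.single (Quot.mk R a) 1 := by
    intro a
    funext q
    simp only [hφdef, LinearMap.coe_mk, AddHom.coe_mk]
    rw [Finset.sum_congr rfl (fun b _ => Pi.single_apply a (1:ℝ) b)]
    rw [Finset.sum_ite_eq' _ a (fun _ => (1:ℝ))]
    simp [Pi.single_apply, eq_comm]
  -- V = ker φ
  have hVker : V = LinearMap.ker φ := by
    apply le_antisymm
    · rw [hVdef, Submodule.span_le]
      rintro v ⟨a, b, hab, rfl⟩
      simp only [SetLike.mem_coe, LinearMap.mem_ker, map_sub, hφsingle]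
      rw [Quot.sound hab, sub_self]
    · intro f hf
      have hf' : ∀ q : Quot R,
          ∑ a ∈ Finset.univ.filter (fun a => Quot.mk R a = q), f a = 0 := by
        intro q
        have := LinearMap.mem_ker.mp hf
        exact congrFun this q
      have key : f = ∑ a : Fin d,
          f a • (Pi.single a (1:ℝ) - Pi.single (Quot.out (Quot.mk R a)) 1) := by
        have h1 : f = ∑ a : Fin d, f a • (Pi.single a (1:ℝ) : Fin d → ℝ) := by
          funext j
          simp [Pi.single_apply, Finset.sum_ite_eq' , mul_comm]
        have h2 : ∑ a : Fin d,
            f a • (Pi.single (Quot.out (Quot.mk R a)) (1:ℝ) : Fin d → ℝ) = 0 := by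
          rw [← Finset.sum_fiberwise Finset.univ (fun a => Quot.mk R a)
            (fun a => f a • (Pi.single (Quot.out (Quot.mk R a)) (1:ℝ) : Fin d → ℝ))]
          refine Finset.sum_eq_zero fun q _ => ?_
          have : ∀ a ∈ Finset.univ.filter (fun a => Quot.mk R a = q),
              f a • (Pi.single (Quot.out (Quot.mk R a)) (1:ℝ) : Fin d → ℝ)
                = f a • (Pi.single (Quot.out q) (1:ℝ) : Fin d → ℝ) := by
            intro a ha
            rw [(Finset.mem_filter.mp ha).2]
          rw [Finset.sum_congr rfl this, ← Finset.sum_smul, hf' q, zero_smul]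
        calc f = ∑ a : Fin d, f a • (Pi.single a (1:ℝ) : Fin d → ℝ) := h1
          _ = ∑ a : Fin d,
              f a • (Pi.single a (1:ℝ) - Pi.single (Quot.out (Quot.mk R a)) 1)
              + ∑ a : Fin d,
              f a • (Pi.single (Quot.out (Quot.mk R a)) (1:ℝ) : Fin d → ℝ) := by
                rw [← Finset.sum_add_distrib]
                refine Finset.sum_congr rfl fun a _ => ?_
                rw [← smul_add, sub_add_cancel]
          _ = _ := by rw [h2, add_zero]
      rw [key]
      refine V.sum_mem fun a _ => V.smul_mem _ ?_
      refine hEqv _ _ (Quot.eqvGen_exact ?_)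
      rw [Quot.out_eq]
  -- range φ = ⊤
  have hφsurj : LinearMap.range φ = ⊤ := by
    rw [← top_le_iff, ← (Pi.basisFun ℝ (Quot R)).span_eq, Submodule.span_le]
    rintro v ⟨q, rfl⟩
    obtain ⟨a, rfl⟩ := Quot.mk_surjective q
    exact ⟨Pi.single a 1, by rw [hφsingle, Pi.basisFun_apply]⟩
  -- rank computation
  have hrank := LinearMap.finrank_range_add_finrank_ker φ
  rw [hφsurj] at hrank
  rw [finrank_top] at hrank
  have hQ : Module.finrank ℝ ((Quot R) → ℝ) = Fintype.card (Quot R) :=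
    Module.finrank_pi ℝ
  have hD : Module.finrank ℝ (Fin d → ℝ) = d := by simp
  -- vectorSpan F = V
  have hVS : vectorSpan ℝ F = V := by
    apply le_antisymm
    · rw [vectorSpan_def, Submodule.span_le]
      rintro v hv
      obtain ⟨p, hp, q, hq, rfl⟩ := Set.mem_vsub.mp hv
      rw [hF] at hp hq
      obtain ⟨g, hg, rfl⟩ := (Set.mem_fintype_sum _ _).mp hp
      obtain ⟨h, hh, rfl⟩ := (Set.mem_fintype_sum _ _).mp hq
      have : (∑ i, g i) -ᵥ (∑ i, h i) = ∑ i, (g i - h i) := by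
        rw [vsub_eq_sub, Finset.sum_sub_distrib]
      rw [this]
      refine V.sum_mem fun i _ => ?_
      have hd1 : g i -ᵥ h i ∈ (affineSpan ℝ
          {v : Fin d → ℝ | ∃ a ∈ S i, v = Pi.single a (1 : ℝ)}).direction :=
        AffineSubspace.vsub_mem_direction
          (convexHull_subset_affineSpan _ (hg i)) (convexHull_subset_affineSpan _ (hh i))
      rw [direction_affineSpan, vectorSpan_def] at hd1
      have hsub : Submodule.span ℝ
          ({v : Fin d → ℝ | ∃ a ∈ S i, v = Pi.single a (1 : ℝ)} -ᵥ
            {v : Fin d → ℝ | ∃ a ∈ S i, v = Pi.single a (1 : ℝ)}) ≤ V := by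
        rw [Submodule.span_le]
        rintro w hw
        obtain ⟨x, hx, y, hy, rfl⟩ := Set.mem_vsub.mp hw
        obtain ⟨a, ha, rfl⟩ := hx
        obtain ⟨b, hb, rfl⟩ := hy
        exact Submodule.subset_span ⟨a, b, ⟨i, ha, hb⟩, by rw [vsub_eq_sub]⟩
      simpa using hsub hd1
    · rw [hVdef, Submodule.span_le]
      rintro v ⟨a, b, ⟨i, ha, hb⟩, rfl⟩
      set c : Fin n → Fin d := fun j => (hSne j).choose with hcdef
      have hc : ∀ j, c j ∈ S j := fun j => (hSne j).choose_spec
      have hmem : ∀ x : Fin d, x ∈ S i →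
          (∑ j, (Pi.single (Function.update c i x j) (1:ℝ) : Fin d → ℝ)) ∈ F := by
        intro x hx
        rw [hF]
        refine (Set.mem_fintype_sum _ _).mpr
          ⟨fun j => Pi.single (Function.update c i x j) 1, fun j => ?_, rfl⟩
        refine subset_convexHull ℝ _ ⟨Function.update c i x j, ?_, rfl⟩
        by_cases hji : j = i
        · subst hji; rwa [Function.update_self]
        · rw [Function.update_of_ne hji]; exact hc j
      have hpa := hmem a ha
      have hpb := hmem b hb
      have hv := vsub_mem_vectorSpan ℝ hpa hpb
      have heq : (∑ j, (Pi.single (Function.update c i a j) (1:ℝ) : Fin d → ℝ)) -ᵥ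
          (∑ j, (Pi.single (Function.update c i b j) (1:ℝ) : Fin d → ℝ))
          = Pi.single a (1:ℝ) - Pi.single b 1 := by
        rw [vsub_eq_sub, ← Finset.sum_sub_distrib]
        rw [Finset.sum_eq_single i]
        · rw [Function.update_self, Function.update_self]
        · intro j _ hji
          rw [Function.update_of_ne hji, Function.update_of_ne hji, sub_self]
        · intro hmem'; exact absurd (Finset.mem_univ i) hmem'
      rwa [heq] at hv
  rw [hVS, hVker]
  rw [hQ, hD] at hrank
  rw [Nat.card_eq_fintype_card]
  omega
end

section
/- Let n, k, s be positive integers with k > s, and choose indices i_0, …, i_{n−1} with i_j ∈ λ_j for each j. Then the point v = e_{i_0} + e_{i_1} + ⋯ + e_{i_{n−1}} is an extreme point (vertex) of P_{n,k,s} if and only if there is no index j ∈ {0,…,n−2} such that i_j ≠ i_{j+1}, i_{j+1} ∈ λ_j, and i_j ∈ λ_{j+1}. Consequently every extreme point of P_{n,k,s} arises from exactly one such admissible tuple. -/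
open Pointwise

/-- The window `λ_i = {s·i, …, s·i+k−1}` simplex-sum polytope
`P_{n,k,s} = Δ_{λ_0} + ⋯ + Δ_{λ_{n-1}} ⊆ ℝ^K`, `K = s(n−1)+k`. -/
noncomputable def poolPolytope (n k s : ℕ) : Set (Fin (s * (n - 1) + k) → ℝ) :=
  ∑ i ∈ Finset.range n,
    convexHull ℝ {v : Fin (s * (n - 1) + k) → ℝ |
      ∃ j : Fin (s * (n - 1) + k), s * i ≤ (j : ℕ) ∧ (j : ℕ) < s * i + k ∧
        v = Pi.single j (1 : ℝ)}

/-- `b_n^{(k,s)}`, the number of vertices (extreme points) of `P_{n,k,s}`. -/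
noncomputable def numVertices (n k s : ℕ) : ℕ :=
  Nat.card (Set.extremePoints ℝ (poolPolytope n k s))

/-- A pair of consecutive indices witnessing a 2-cycle: `i_j ≠ i_{j+1}`, `i_{j+1} ∈ λ_j`
and `i_j ∈ λ_{j+1}`. -/
def badPair (n k s : ℕ) (i : Fin n → Fin (s * (n - 1) + k)) : Prop :=
  ∃ j j' : Fin n, (j' : ℕ) = (j : ℕ) + 1 ∧ i j ≠ i j' ∧
    (s * (j : ℕ) ≤ (i j' : ℕ) ∧ (i j' : ℕ) < s * (j : ℕ) + k) ∧
    (s * ((j : ℕ) + 1) ≤ (i j : ℕ) ∧ (i j : ℕ) < s * ((j : ℕ) + 1) + k)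

/-- An admissible tuple: `i_j ∈ λ_j` for all `j`, and no bad pair. -/
def admissible (n k s : ℕ) (i : Fin n → Fin (s * (n - 1) + k)) : Prop :=
  (∀ j : Fin n, s * (j : ℕ) ≤ (i j : ℕ) ∧ (i j : ℕ) < s * (j : ℕ) + k) ∧ ¬ badPair n k s i

namespace PoolAux


/-- The vertex set of the `j`-th window simplex. -/
def Vset (n k s : ℕ) (j : ℕ) : Set (Fin (s * (n - 1) + k) → ℝ) :=
  {v : Fin (s * (n - 1) + k) → ℝ |
    ∃ m : Fin (s * (n - 1) + k), s * j ≤ (m : ℕ) ∧ (m : ℕ) < s * j + k ∧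
      v = Pi.single m (1 : ℝ)}

/-- Superset of the `j`-th window simplex: nonnegative, sums to 1, supported in the window. -/
def Tset (n k s : ℕ) (j : ℕ) : Set (Fin (s * (n - 1) + k) → ℝ) :=
  {v | (∀ m, 0 ≤ v m) ∧ (∑ m, v m = 1) ∧
    ∀ m, v m ≠ 0 → s * j ≤ (m : ℕ) ∧ (m : ℕ) < s * j + k}

lemma pool_eq (n k s : ℕ) :
    poolPolytope n k s = ∑ j ∈ Finset.range n, convexHull ℝ (Vset n k s j) := rfl

lemma convex_Tset (n k s j : ℕ) : Convex ℝ (Tset n k s j) := by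
  rintro x ⟨hx0, hx1, hxs⟩ y ⟨hy0, hy1, hys⟩ a b ha hb hab
  refine ⟨fun m => add_nonneg (smul_nonneg ha (hx0 m)) (smul_nonneg hb (hy0 m)), ?_, fun m hm => ?_⟩
  · simp only [Pi.add_apply, Pi.smul_apply, smul_eq_mul, Finset.sum_add_distrib,
      ← Finset.mul_sum, hx1, hy1]
    linarith
  · simp only [Pi.add_apply, Pi.smul_apply, smul_eq_mul] at hm
    rcases eq_or_lt_of_le (hx0 m) with h1 | h1
    · rcases eq_or_lt_of_le (hy0 m) with h2 | h2
      · exact absurd (by rw [← h1, ← h2]; ring) hm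
      · exact hys m (by nlinarith)
    · exact hxs m (by nlinarith)

lemma single_mem_Vset {n k s : ℕ} {j : ℕ} (m : Fin (s * (n - 1) + k))
    (h1 : s * j ≤ (m : ℕ)) (h2 : (m : ℕ) < s * j + k) :
    Pi.single m (1 : ℝ) ∈ Vset n k s j := ⟨m, h1, h2, rfl⟩

lemma Vset_subset_Tset (n k s j : ℕ) : Vset n k s j ⊆ Tset n k s j := by
  rintro v ⟨m, h1, h2, rfl⟩
  refine ⟨fun m' => ?_, ?_, fun m' hm' => ?_⟩
  · rcases eq_or_ne m' m with rfl | h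
    · simp
    · simp [Pi.single_eq_of_ne h]
  · simp [Finset.sum_pi_single]
  · rcases eq_or_ne m' m with rfl | h
    · exact ⟨h1, h2⟩
    · exact absurd (Pi.single_eq_of_ne h _) hm'

lemma hull_Vset_subset_Tset (n k s j : ℕ) :
    convexHull ℝ (Vset n k s j) ⊆ Tset n k s j :=
  convexHull_min (Vset_subset_Tset n k s j) (convex_Tset n k s j)

lemma Tset.le_one {n k s j : ℕ} {v : Fin (s * (n - 1) + k) → ℝ} (hv : v ∈ Tset n k s j)
    (m : Fin (s * (n - 1) + k)) : v m ≤ 1 := by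
  obtain ⟨h0, h1, -⟩ := hv
  calc v m ≤ ∑ m', v m' := Finset.single_le_sum (fun m' _ => h0 m') (Finset.mem_univ m)
  _ = 1 := h1

lemma Tset.eq_single {n k s j : ℕ} {v : Fin (s * (n - 1) + k) → ℝ} (hv : v ∈ Tset n k s j)
    {m : Fin (s * (n - 1) + k)} (hm : v m = 1) : v = Pi.single m (1 : ℝ) := by
  obtain ⟨h0, h1, -⟩ := hv
  have hz : ∑ m' ∈ Finset.univ.erase m, v m' = 0 := by
    have := Finset.add_sum_erase Finset.univ v (Finset.mem_univ m)
    rw [h1, hm] at this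
    linarith
  funext m'
  rcases eq_or_ne m' m with rfl | h
  · simp [hm]
  · have : v m' = 0 := by
      have := (Finset.sum_eq_zero_iff_of_nonneg (fun x _ => h0 x)).1 hz m'
        (Finset.mem_erase.2 ⟨h, Finset.mem_univ _⟩)
      exact this
    simp [this, Pi.single_eq_of_ne h]



variable {n k s : ℕ}

/-- `Edge i a b` : the winner of window `b` lies in window `a` and differs from `a`'s winner. -/
def Edge (i : Fin n → Fin (s * (n - 1) + k)) (a b : Fin n) : Prop :=
  (s * (a : ℕ) ≤ (i b : ℕ) ∧ (i b : ℕ) < s * (a : ℕ) + k) ∧ i b ≠ i a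

/-- A "crossing pair" yields a consecutive bad pair. -/
lemma badPair_of_crossing (i : Fin n → Fin (s * (n - 1) + k))
    (hi : ∀ j : Fin n, s * (j : ℕ) ≤ (i j : ℕ) ∧ (i j : ℕ) < s * (j : ℕ) + k) :
    ∀ d : ℕ, ∀ a b : Fin n, (b : ℕ) - (a : ℕ) = d → (a : ℕ) ≤ (b : ℕ) →
      Edge i a b → Edge i b a → badPair n k s i := by
  intro d
  induction d using Nat.strong_induction_on with
  | _ d IH =>
    rintro a b hd hab ⟨⟨h1, h2⟩, hne⟩ ⟨⟨h3, h4⟩, -⟩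
    have hne' : (i a : ℕ) ≠ (i b : ℕ) := fun h => hne (Fin.ext h.symm)
    have hab' : (a : ℕ) < (b : ℕ) := by
      rcases lt_or_eq_of_le hab with h | h
      · exact h
      · exact absurd (congrArg (fun t => (i t : ℕ)) (Fin.ext h)) hne'
    have ha1n : (a : ℕ) + 1 < n := lt_of_le_of_lt hab' b.isLt
    have hia1 := (hi a).1
    have hia2 := (hi a).2
    have hib1 := (hi b).1
    have hib2 := (hi b).2
    have hsa : s * ((a : ℕ) + 1) = s * (a : ℕ) + s := by ring
    have hsab : s * ((a : ℕ) + 1) ≤ s * (b : ℕ) := Nat.mul_le_mul_left s (by omega)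
    let a' : Fin n := ⟨(a : ℕ) + 1, ha1n⟩
    have hav : (a' : ℕ) = (a : ℕ) + 1 := rfl
    have hA1 : s * ((a : ℕ) + 1) ≤ (i a' : ℕ) := (hi a').1
    have hA2 : (i a' : ℕ) < s * ((a : ℕ) + 1) + k := (hi a').2
    rcases Nat.lt_or_ge ((a' : ℕ)) (b : ℕ) with hlt | hge
    · rw [hav] at hlt
      by_cases hcase : i a = i a'
      · have hcv : (i a : ℕ) = (i a' : ℕ) := congrArg Fin.val hcase
        refine IH ((b : ℕ) - (a' : ℕ)) (by rw [hav]; omega) a' b rfl (by rw [hav]; omega)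
          ⟨⟨?_, ?_⟩, ?_⟩ ⟨⟨?_, ?_⟩, ?_⟩ <;> (try rw [hav])
        · omega
        · omega
        · exact fun h => hne' (by rw [hcv, congrArg Fin.val h])
        · omega
        · omega
        · exact fun h => hne' (by rw [hcv, congrArg Fin.val h])
      · rcases Nat.lt_or_ge ((i a' : ℕ)) (s * (a : ℕ) + k) with hin | hout
        · -- bad pair at (a, a')
          refine ⟨a, a', hav, fun h => hcase h, ⟨by omega, hin⟩, ⟨?_, ?_⟩⟩ <;> omega
        · -- i a' ≥ s*a + k ; recurse with (a', b)
          have hsb : s * (b : ℕ) < s * (a : ℕ) + k := lt_of_le_of_lt h3 hia2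
          refine IH ((b : ℕ) - (a' : ℕ)) (by rw [hav]; omega) a' b rfl (by rw [hav]; omega)
            ⟨⟨?_, ?_⟩, ?_⟩ ⟨⟨?_, ?_⟩, ?_⟩ <;> (try rw [hav])
          · omega
          · omega
          · exact fun h => by have := congrArg Fin.val h; omega
          · omega
          · omega
          · exact fun h => by have := congrArg Fin.val h; omega
    · have hb : (b : ℕ) = (a : ℕ) + 1 := by rw [hav] at hge; omega
      exact ⟨a, b, hb, hne.symm, ⟨h1, h2⟩, by omega, by omega⟩

lemma badPair_of_cycle (i : Fin n → Fin (s * (n - 1) + k))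
    (hi : ∀ j : Fin n, s * (j : ℕ) ≤ (i j : ℕ) ∧ (i j : ℕ) < s * (j : ℕ) + k) :
    ∀ r : ℕ, ∀ _hr : 2 ≤ r, ∀ c : Fin r → Fin n,
      (∀ u : Fin r, Edge i (c u) (c ⟨((u : ℕ) + 1) % r, Nat.mod_lt _ (by omega)⟩)) →
      badPair n k s i := by
  intro r
  induction r using Nat.strong_induction_on with
  | _ r IH =>
    intro hr c0 hedge0
    have hrpos : 0 < r := by omega
    obtain ⟨t0, -, ht0⟩ := Finset.exists_max_image Finset.univ (fun u => ((c0 u : Fin n) : ℕ))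
      ⟨⟨0, hrpos⟩, Finset.mem_univ _⟩
    -- rotated cycle: max position at index r-1
    set c : Fin r → Fin n := fun u => c0 ⟨((u : ℕ) + (t0 : ℕ) + 1) % r, Nat.mod_lt _ hrpos⟩
      with hcdef
    have hedge : ∀ u : Fin r, Edge i (c u) (c ⟨((u : ℕ) + 1) % r, Nat.mod_lt _ hrpos⟩) := by
      intro u
      have h := hedge0 ⟨((u : ℕ) + (t0 : ℕ) + 1) % r, Nat.mod_lt _ hrpos⟩
      have hkey : (((u : ℕ) + 1) % r + (t0 : ℕ) + 1) % r
          = (((u : ℕ) + (t0 : ℕ) + 1) % r + 1) % r := by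
        rw [add_assoc, Nat.mod_add_mod, Nat.mod_add_mod]
        congr 1
        omega
      have hidx : (⟨(((u : ℕ) + 1) % r + (t0 : ℕ) + 1) % r, Nat.mod_lt _ hrpos⟩ : Fin r)
          = ⟨(((u : ℕ) + (t0 : ℕ) + 1) % r + 1) % r, Nat.mod_lt _ hrpos⟩ := Fin.ext hkey
      show Edge i (c0 ⟨((u : ℕ) + (t0 : ℕ) + 1) % r, Nat.mod_lt _ hrpos⟩)
        (c0 ⟨(((u : ℕ) + 1) % r + (t0 : ℕ) + 1) % r, Nat.mod_lt _ hrpos⟩)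
      rw [hidx]
      exact h
    have h2r : r - 2 < r := by omega
    have h1r : r - 1 < r := by omega
    have hmax : ∀ u : Fin r, ((c u : Fin n) : ℕ) ≤ ((c ⟨r - 1, h1r⟩ : Fin n) : ℕ) := by
      intro u
      have h1 : c ⟨r - 1, h1r⟩ = c0 t0 := by
        show c0 _ = c0 t0
        congr 1
        apply Fin.ext
        show (r - 1 + (t0 : ℕ) + 1) % r = (t0 : ℕ)
        have h' : r - 1 + (t0 : ℕ) + 1 = (t0 : ℕ) + r := by omega
        rw [h', Nat.add_mod_right]
        exact Nat.mod_eq_of_lt t0.isLt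
      rw [h1]
      exact ht0 _ (Finset.mem_univ _)
    have e1 : Edge i (c ⟨r - 2, h2r⟩) (c ⟨r - 1, h1r⟩) := by
      have h := hedge ⟨r - 2, h2r⟩
      have hidx : (((⟨r - 2, h2r⟩ : Fin r) : ℕ) + 1) % r = r - 1 := by
        show (r - 2 + 1) % r = r - 1
        have h' : r - 2 + 1 = r - 1 := by omega
        rw [h']
        exact Nat.mod_eq_of_lt (by omega)
      have hidx2 : (⟨(((⟨r - 2, h2r⟩ : Fin r) : ℕ) + 1) % r, Nat.mod_lt _ hrpos⟩ : Fin r)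
          = ⟨r - 1, h1r⟩ := Fin.ext hidx
      rw [hidx2] at h
      exact h
    have e2 : Edge i (c ⟨r - 1, h1r⟩) (c ⟨0, hrpos⟩) := by
      have h := hedge ⟨r - 1, h1r⟩
      have hidx : (((⟨r - 1, h1r⟩ : Fin r) : ℕ) + 1) % r = 0 := by
        show (r - 1 + 1) % r = 0
        have h' : r - 1 + 1 = r := by omega
        rw [h']
        exact Nat.mod_self r
      have hidx2 : (⟨(((⟨r - 1, h1r⟩ : Fin r) : ℕ) + 1) % r, Nat.mod_lt _ hrpos⟩ : Fin r)
          = ⟨0, hrpos⟩ := Fin.ext hidx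
      rw [hidx2] at h
      exact h
    have hmaxA : ((c ⟨r - 2, h2r⟩ : Fin n) : ℕ) ≤ ((c ⟨r - 1, h1r⟩ : Fin n) : ℕ) := hmax _
    have hmaxC : ((c ⟨0, hrpos⟩ : Fin n) : ℕ) ≤ ((c ⟨r - 1, h1r⟩ : Fin n) : ℕ) := hmax _
    rcases le_or_gt ((c ⟨r - 2, h2r⟩ : Fin n) : ℕ) ((c ⟨0, hrpos⟩ : Fin n) : ℕ) with hAC | hCA
    · -- crossing pair (C, B)
      refine badPair_of_crossing i hi _ (c ⟨0, hrpos⟩) (c ⟨r - 1, h1r⟩) rfl hmaxC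
        ⟨⟨?_, ?_⟩, ?_⟩ e2
      · calc s * ((c ⟨0, hrpos⟩ : Fin n) : ℕ) ≤ s * ((c ⟨r - 1, h1r⟩ : Fin n) : ℕ) :=
            Nat.mul_le_mul_left s hmaxC
        _ ≤ ((i (c ⟨r - 1, h1r⟩)) : ℕ) := (hi _).1
      · calc ((i (c ⟨r - 1, h1r⟩)) : ℕ) < s * ((c ⟨r - 2, h2r⟩ : Fin n) : ℕ) + k := e1.1.2
        _ ≤ s * ((c ⟨0, hrpos⟩ : Fin n) : ℕ) + k := by
            have := Nat.mul_le_mul_left s hAC; omega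
      · exact e2.2.symm
    · have hr3 : 3 ≤ r := by
        by_contra hcon
        have hr2 : r = 2 := by omega
        have heq : (⟨r - 2, h2r⟩ : Fin r) = ⟨0, hrpos⟩ := by
          apply Fin.ext; show r - 2 = 0; omega
        rw [heq] at hCA
        omega
    -- dropping below: hv case split
      by_cases hv : i (c ⟨0, hrpos⟩) = i (c ⟨r - 2, h2r⟩)
      · -- drop indices r-2 and r-1 ; r = 3 is impossible
        have hr4 : 4 ≤ r := by
          by_contra hcon
          have hr3' : r = 3 := by omega
          have h0 := hedge ⟨0, hrpos⟩
          have hidx : (⟨(((⟨0, hrpos⟩ : Fin r) : ℕ) + 1) % r, Nat.mod_lt _ hrpos⟩ : Fin r)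
              = ⟨r - 2, h2r⟩ := by
            apply Fin.ext
            show (0 + 1) % r = r - 2
            rw [Nat.mod_eq_of_lt (by omega)]
            omega
          rw [hidx] at h0
          exact h0.2 hv.symm
        refine IH (r - 2) h2r (by omega) (fun u => c ⟨(u : ℕ), lt_trans u.isLt h2r⟩) ?_
        intro u
        by_cases hu : (u : ℕ) + 1 < r - 2
        · have h := hedge ⟨(u : ℕ), lt_trans u.isLt h2r⟩
          have hidx : (⟨(((⟨(u : ℕ), lt_trans u.isLt h2r⟩ : Fin r) : ℕ) + 1) % r,
              Nat.mod_lt _ hrpos⟩ : Fin r) = ⟨(u : ℕ) + 1, by omega⟩ := by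
            apply Fin.ext
            show ((u : ℕ) + 1) % r = (u : ℕ) + 1
            exact Nat.mod_eq_of_lt (by omega)
          rw [hidx] at h
          have hidx3 : (⟨(((u : ℕ) + 1) % (r - 2) : ℕ), lt_trans (Nat.mod_lt _ (by omega)) h2r⟩
              : Fin r) = ⟨(u : ℕ) + 1, by omega⟩ := Fin.ext (Nat.mod_eq_of_lt hu)
          show Edge i (c ⟨(u : ℕ), lt_trans u.isLt h2r⟩)
            (c ⟨(((u : ℕ) + 1) % (r - 2) : ℕ), lt_trans (Nat.mod_lt _ (by omega)) h2r⟩)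
          rw [hidx3]
          exact h
        · have huv : (u : ℕ) = r - 3 := by have := u.isLt; omega
          have h1 : ((u : ℕ) + 1) % (r - 2) = 0 := by
            rw [huv]
            have h' : r - 3 + 1 = r - 2 := by omega
            rw [h']
            exact Nat.mod_self _
          have h3r : r - 3 < r := by omega
          have h := hedge ⟨r - 3, h3r⟩
          have hidx : (⟨(((⟨r - 3, h3r⟩ : Fin r) : ℕ) + 1) % r, Nat.mod_lt _ hrpos⟩ : Fin r)
              = ⟨r - 2, h2r⟩ := by
            apply Fin.ext
            show (r - 3 + 1) % r = r - 2
            rw [Nat.mod_eq_of_lt (by omega)]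
            omega
          rw [hidx] at h
          show Edge i (c ⟨(u : ℕ), lt_trans u.isLt h2r⟩)
            (c ⟨(((u : ℕ) + 1) % (r - 2) : ℕ), lt_trans (Nat.mod_lt _ (by omega)) h2r⟩)
          have hidx2 : (⟨(u : ℕ), lt_trans u.isLt h2r⟩ : Fin r) = ⟨r - 3, h3r⟩ := Fin.ext huv
          have hidx3 : (⟨(((u : ℕ) + 1) % (r - 2) : ℕ), lt_trans (Nat.mod_lt _ (by omega)) h2r⟩
              : Fin r) = ⟨0, hrpos⟩ := Fin.ext h1
          rw [hidx2, hidx3]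
          unfold Edge at h ⊢
          rw [hv]
          exact h
      · -- drop index r-1
        refine IH (r - 1) h1r (by omega) (fun u => c ⟨(u : ℕ), lt_trans u.isLt h1r⟩) ?_
        intro u
        by_cases hu : (u : ℕ) + 1 < r - 1
        · have h := hedge ⟨(u : ℕ), lt_trans u.isLt h1r⟩
          have hidx : (⟨(((⟨(u : ℕ), lt_trans u.isLt h1r⟩ : Fin r) : ℕ) + 1) % r,
              Nat.mod_lt _ hrpos⟩ : Fin r) = ⟨(u : ℕ) + 1, by omega⟩ := by
            apply Fin.ext
            show ((u : ℕ) + 1) % r = (u : ℕ) + 1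
            exact Nat.mod_eq_of_lt (by omega)
          rw [hidx] at h
          show Edge i (c ⟨(u : ℕ), lt_trans u.isLt h1r⟩)
            (c ⟨(((u : ℕ) + 1) % (r - 1) : ℕ), lt_trans (Nat.mod_lt _ (by omega)) h1r⟩)
          have hidx3 : (⟨(((u : ℕ) + 1) % (r - 1) : ℕ), lt_trans (Nat.mod_lt _ (by omega)) h1r⟩
              : Fin r) = ⟨(u : ℕ) + 1, by omega⟩ := Fin.ext (Nat.mod_eq_of_lt hu)
          rw [hidx3]
          exact h
        · have huv : (u : ℕ) = r - 2 := by have := u.isLt; omega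
          have h1 : ((u : ℕ) + 1) % (r - 1) = 0 := by
            rw [huv]
            have h' : r - 2 + 1 = r - 1 := by omega
            rw [h']
            exact Nat.mod_self _
          show Edge i (c ⟨(u : ℕ), lt_trans u.isLt h1r⟩)
            (c ⟨(((u : ℕ) + 1) % (r - 1) : ℕ), lt_trans (Nat.mod_lt _ (by omega)) h1r⟩)
          have hidx2 : (⟨(u : ℕ), lt_trans u.isLt h1r⟩ : Fin r) = ⟨r - 2, h2r⟩ := Fin.ext huv
          have hidx3 : (⟨(((u : ℕ) + 1) % (r - 1) : ℕ), lt_trans (Nat.mod_lt _ (by omega)) h1r⟩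
              : Fin r) = ⟨0, hrpos⟩ := Fin.ext h1
          rw [hidx2, hidx3]
          -- goal : Edge i A C
          refine ⟨⟨?_, ?_⟩, hv⟩
          · calc s * ((c ⟨r - 2, h2r⟩ : Fin n) : ℕ) ≤ s * ((c ⟨r - 1, h1r⟩ : Fin n) : ℕ) :=
                Nat.mul_le_mul_left s hmaxA
            _ ≤ ((i (c ⟨0, hrpos⟩)) : ℕ) := e2.1.1
          · have hCw := (hi (c ⟨0, hrpos⟩)).2
            have hmono := Nat.mul_le_mul_left s (le_of_lt hCA)
            omega


/-- Uniqueness of decomposition: if the tuple `i` has no bad pair, then the only way to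
write `∑ e_{i_j}` as a sum of points of the window "simplices" is the obvious one. -/
lemma decomp_unique (i : Fin n → Fin (s * (n - 1) + k))
    (hi : ∀ j : Fin n, s * (j : ℕ) ≤ (i j : ℕ) ∧ (i j : ℕ) < s * (j : ℕ) + k)
    (hnb : ¬ badPair n k s i)
    (W : Fin n → (Fin (s * (n - 1) + k) → ℝ))
    (hW : ∀ j : Fin n, W j ∈ Tset n k s (j : ℕ))
    (hsum : ∑ j : Fin n, W j = ∑ j : Fin n, Pi.single (i j) (1 : ℝ)) :
    ∀ j : Fin n, W j = Pi.single (i j) (1 : ℝ) := by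
  classical
  have hcol : ∀ m, ∑ a : Fin n, W a m = ∑ a : Fin n, (if m = i a then (1 : ℝ) else 0) := by
    intro m
    have h1 := congrFun hsum m
    simpa [Finset.sum_apply, Pi.single_apply] using h1
  have hle1 : ∀ j : Fin n, W j (i j) ≤ 1 := fun j => Tset.le_one (hW j) _
  -- key step : a deficient window points to another deficient window
  have key : ∀ j : Fin n, W j (i j) < 1 → ∃ a : Fin n, W a (i a) < 1 ∧ Edge i j a := by
    intro j hj
    have hsum1 : ∑ m, W j m = 1 := (hW j).2.1
    have h0 : ∀ m, 0 ≤ W j m := (hW j).1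
    have hex : ∃ m, m ≠ i j ∧ W j m ≠ 0 := by
      by_contra hcon
      push_neg at hcon
      have h1 : ∑ m, W j m = W j (i j) :=
        Finset.sum_eq_single (i j) (fun m _ hm => hcon m hm)
          (fun h => absurd (Finset.mem_univ _) h)
      rw [hsum1] at h1
      linarith
    obtain ⟨m, hmne, hm0⟩ := hex
    have hmpos : 0 < W j m := lt_of_le_of_ne (h0 m) (Ne.symm hm0)
    have hmwin : s * (j : ℕ) ≤ (m : ℕ) ∧ (m : ℕ) < s * (j : ℕ) + k := (hW j).2.2 m hm0
    set F : Finset (Fin n) := Finset.univ.filter (fun a : Fin n => m = i a) with hF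
    have hxF : ∑ a : Fin n, (if m = i a then (1 : ℝ) else 0) = (F.card : ℝ) := by
      rw [hF, Finset.sum_boole]
    have hcard : ∑ a : Fin n, W a m = (F.card : ℝ) := by rw [hcol m, hxF]
    have hjF : j ∉ F := by
      rw [hF, Finset.mem_filter]
      rintro ⟨-, h⟩
      exact hmne h
    have hexa : ∃ a ∈ F, W a m < 1 := by
      by_contra hcon
      push_neg at hcon
      have h1 : (F.card : ℝ) ≤ ∑ a ∈ F, W a m := by
        calc (F.card : ℝ) = ∑ _a ∈ F, (1 : ℝ) := by simp
        _ ≤ ∑ a ∈ F, W a m := Finset.sum_le_sum hcon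
      have h2 : ∑ a ∈ insert j F, W a m ≤ ∑ a : Fin n, W a m :=
        Finset.sum_le_sum_of_subset_of_nonneg (Finset.subset_univ _)
          (fun a _ _ => (hW a).1 m)
      rw [Finset.sum_insert hjF] at h2
      rw [hcard] at h2
      linarith
    obtain ⟨a, haF, haW⟩ := hexa
    have hia : m = i a := (Finset.mem_filter.1 haF).2
    refine ⟨a, by rwa [← hia], ⟨⟨?_, ?_⟩, ?_⟩⟩
    · rw [← hia]; exact hmwin.1
    · rw [← hia]; exact hmwin.2
    · rw [← hia]; exact fun h => hmne h
  -- conclude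
  by_contra hcon
  push_neg at hcon
  obtain ⟨j0, hj0⟩ := hcon
  have hdef0 : W j0 (i j0) < 1 :=
    lt_of_le_of_ne (hle1 j0) (fun h => hj0 (Tset.eq_single (hW j0) h))
  set D := {j : Fin n // W j (i j) < 1} with hD
  let f : D → D := fun p => ⟨(key p.1 p.2).choose, (key p.1 p.2).choose_spec.1⟩
  have hfE : ∀ p : D, Edge i p.1 (f p).1 := fun p => (key p.1 p.2).choose_spec.2
  let b : ℕ → D := fun t => f^[t] ⟨j0, hdef0⟩
  have hb : ∀ t, b (t + 1) = f (b t) := fun t => Function.iterate_succ_apply' f t _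
  have hedges : ∀ t, Edge i (b t).1 (b (t + 1)).1 := fun t => by rw [hb]; exact hfE (b t)
  obtain ⟨t1, t2, hne, heq⟩ := Finite.exists_ne_map_eq_of_infinite b
  have hmain : ∀ t t' : ℕ, t < t' → b t = b t' → False := by
    intro t t' hlt heq'
    have hr1 : 1 ≤ t' - t := by omega
    rcases eq_or_lt_of_le hr1 with hr1' | hr2
    · -- period 1 : self-edge, contradiction
      have h := hedges t
      have ht1 : t + 1 = t' := by omega
      rw [ht1, ← heq'] at h
      exact h.2 rfl
    · have hr2' : 2 ≤ t' - t := hr2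
      apply hnb
      refine badPair_of_cycle i hi (t' - t) hr2' (fun u => (b (t + (u : ℕ))).1) ?_
      intro u
      by_cases hu : (u : ℕ) + 1 < t' - t
      · have h1 : ((u : ℕ) + 1) % (t' - t) = (u : ℕ) + 1 := Nat.mod_eq_of_lt hu
        have h := hedges (t + (u : ℕ))
        have h2 : t + (u : ℕ) + 1 = t + ((u : ℕ) + 1) := by omega
        rw [h2] at h
        show Edge i (b (t + (u : ℕ))).1 (b (t + ((u : ℕ) + 1) % (t' - t))).1
        rw [h1]
        exact h
      · have huv : (u : ℕ) = t' - t - 1 := by have := u.isLt; omega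
        have h1 : ((u : ℕ) + 1) % (t' - t) = 0 := by
          rw [huv]
          have h' : t' - t - 1 + 1 = t' - t := by omega
          rw [h']
          exact Nat.mod_self _
        have h := hedges (t + (u : ℕ))
        have h2 : t + (u : ℕ) + 1 = t' := by omega
        rw [h2, ← heq'] at h
        show Edge i (b (t + (u : ℕ))).1 (b (t + ((u : ℕ) + 1) % (t' - t))).1
        rw [h1]
        simpa using h
  rcases hne.lt_or_gt with hlt | hlt
  · exact hmain t1 t2 hlt heq
  · exact hmain t2 t1 hlt heq.symm

lemma sum_mem_pool (f : Fin n → Fin (s * (n - 1) + k))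
    (hf : ∀ j : Fin n, s * (j : ℕ) ≤ (f j : ℕ) ∧ (f j : ℕ) < s * (j : ℕ) + k) :
    (∑ j : Fin n, Pi.single (f j) (1 : ℝ)) ∈ poolPolytope n k s := by
  classical
  rw [pool_eq]
  rw [Set.mem_finset_sum]
  refine ⟨fun t => if h : t < n then Pi.single (f ⟨t, h⟩) (1 : ℝ) else 0, ?_, ?_⟩
  · intro t ht
    have h : t < n := Finset.mem_range.1 ht
    dsimp only
    rw [dif_pos h]
    exact subset_convexHull ℝ _ (single_mem_Vset _ (hf ⟨t, h⟩).1 (hf ⟨t, h⟩).2)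
  · rw [← Fin.sum_univ_eq_sum_range]
    apply Finset.sum_congr rfl
    intro u _
    rw [dif_pos u.isLt, Fin.eta]

lemma notExtreme_of_badPair (f : Fin n → Fin (s * (n - 1) + k))
    (hf : ∀ j : Fin n, s * (j : ℕ) ≤ (f j : ℕ) ∧ (f j : ℕ) < s * (j : ℕ) + k)
    (hbad : badPair n k s f) :
    (∑ j : Fin n, Pi.single (f j) (1 : ℝ)) ∉
      Set.extremePoints ℝ (poolPolytope n k s) := by
  classical
  obtain ⟨j, j', hjj', hne, hw1, hw2⟩ := hbad
  set x : Fin (s * (n - 1) + k) → ℝ := ∑ t : Fin n, Pi.single (f t) (1 : ℝ) with hxdef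
  -- the two exchanged tuples
  set fu := Function.update f j' (f j) with hfu
  set fw := Function.update f j (f j') with hfw
  have hjne : j ≠ j' := by
    intro h
    rw [h] at hne
    exact hne rfl
  have hfu_win : ∀ t : Fin n, s * (t : ℕ) ≤ (fu t : ℕ) ∧ (fu t : ℕ) < s * (t : ℕ) + k := by
    intro t
    rcases eq_or_ne t j' with htj | htj
    · have hval : fu t = f j := by rw [hfu, htj, Function.update_self]
      rw [hval, htj, hjj']
      exact hw2
    · rw [hfu, Function.update_of_ne htj]
      exact hf t
  have hfw_win : ∀ t : Fin n, s * (t : ℕ) ≤ (fw t : ℕ) ∧ (fw t : ℕ) < s * (t : ℕ) + k := by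
    intro t
    rcases eq_or_ne t j with htj | htj
    · have hval : fw t = f j' := by rw [hfw, htj, Function.update_self]
      rw [hval, htj]
      exact hw1
    · rw [hfw, Function.update_of_ne htj]
      exact hf t
  set u : Fin (s * (n - 1) + k) → ℝ := ∑ t : Fin n, Pi.single (fu t) (1 : ℝ) with hudef
  set w : Fin (s * (n - 1) + k) → ℝ := ∑ t : Fin n, Pi.single (fw t) (1 : ℝ) with hwdef
  set R : Fin (s * (n - 1) + k) → ℝ := ∑ t ∈ Finset.univ.erase j', Pi.single (f t) (1 : ℝ)
    with hR
  set R' : Fin (s * (n - 1) + k) → ℝ := ∑ t ∈ Finset.univ.erase j, Pi.single (f t) (1 : ℝ)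
    with hR'
  have hu : u = Pi.single (f j) (1 : ℝ) + R := by
    rw [hudef, ← Finset.add_sum_erase _ _ (Finset.mem_univ j'), hR]
    congr 1
    · rw [hfu, Function.update_self]
    · apply Finset.sum_congr rfl
      intro t ht
      rw [hfu, Function.update_of_ne (Finset.mem_erase.1 ht).1]
  have hx1 : x = Pi.single (f j') (1 : ℝ) + R := by
    rw [hxdef, ← Finset.add_sum_erase _ _ (Finset.mem_univ j'), hR]
  have hw' : w = Pi.single (f j') (1 : ℝ) + R' := by
    rw [hwdef, ← Finset.add_sum_erase _ _ (Finset.mem_univ j), hR']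
    congr 1
    · rw [hfw, Function.update_self]
    · apply Finset.sum_congr rfl
      intro t ht
      rw [hfw, Function.update_of_ne (Finset.mem_erase.1 ht).1]
  have hx2 : x = Pi.single (f j) (1 : ℝ) + R' := by
    rw [hxdef, ← Finset.add_sum_erase _ _ (Finset.mem_univ j), hR']
  have huw : u + w = x + x := by
    rw [hu, hw']
    nth_rewrite 1 [hx1]
    nth_rewrite 1 [hx2]
    abel
  have hux : u ≠ x := by
    intro h
    rw [hu, hx1] at h
    have h2 : (Pi.single (f j) (1 : ℝ) : Fin (s * (n - 1) + k) → ℝ)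
        = Pi.single (f j') (1 : ℝ) := by
      have := add_right_cancel h
      exact this
    have h3 := congrFun h2 (f j)
    rw [Pi.single_eq_same, Pi.single_eq_of_ne hne] at h3
    exact one_ne_zero h3
  intro hext
  rw [mem_extremePoints] at hext
  obtain ⟨-, hext2⟩ := hext
  have hseg : x ∈ openSegment ℝ u w := by
    refine ⟨2⁻¹, 2⁻¹, by norm_num, by norm_num, by norm_num, ?_⟩
    calc (2⁻¹ : ℝ) • u + (2⁻¹ : ℝ) • w = (2⁻¹ : ℝ) • (u + w) := (smul_add _ _ _).symm
    _ = (2⁻¹ : ℝ) • ((2 : ℝ) • x) := by rw [huw, two_smul]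
    _ = x := by rw [smul_smul]; norm_num
  exact hux ((hext2 u (sum_mem_pool fu hfu_win) w (sum_mem_pool fw hfw_win) hseg).1)

lemma extreme_of_not_badPair (i : Fin n → Fin (s * (n - 1) + k))
    (hi : ∀ j : Fin n, s * (j : ℕ) ≤ (i j : ℕ) ∧ (i j : ℕ) < s * (j : ℕ) + k)
    (hnb : ¬ badPair n k s i) :
    (∑ j : Fin n, Pi.single (i j) (1 : ℝ)) ∈
      Set.extremePoints ℝ (poolPolytope n k s) := by
  classical
  rw [mem_extremePoints]
  refine ⟨sum_mem_pool i hi, ?_⟩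
  intro y hy z hz hseg
  obtain ⟨a, b, ha, hb, hab, habx⟩ := hseg
  rw [pool_eq, Set.mem_finset_sum] at hy hz
  obtain ⟨gy, hgy, hgysum⟩ := hy
  obtain ⟨gz, hgz, hgzsum⟩ := hz
  have hgyT : ∀ j : Fin n, gy (j : ℕ) ∈ Tset n k s (j : ℕ) := fun j =>
    hull_Vset_subset_Tset n k s (j : ℕ) (hgy (Finset.mem_range.2 j.isLt))
  have hgzT : ∀ j : Fin n, gz (j : ℕ) ∈ Tset n k s (j : ℕ) := fun j =>
    hull_Vset_subset_Tset n k s (j : ℕ) (hgz (Finset.mem_range.2 j.isLt))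
  set W : Fin n → (Fin (s * (n - 1) + k) → ℝ) :=
    fun j => a • gy (j : ℕ) + b • gz (j : ℕ) with hWdef
  have hWT : ∀ j : Fin n, W j ∈ Tset n k s (j : ℕ) := fun j =>
    convex_Tset n k s (j : ℕ) (hgyT j) (hgzT j) ha.le hb.le hab
  have hysum : ∑ j : Fin n, gy (j : ℕ) = y := by
    rw [Fin.sum_univ_eq_sum_range]
    exact hgysum
  have hzsum : ∑ j : Fin n, gz (j : ℕ) = z := by
    rw [Fin.sum_univ_eq_sum_range]
    exact hgzsum
  have hWsum : ∑ j : Fin n, W j = ∑ j : Fin n, Pi.single (i j) (1 : ℝ) := by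
    rw [hWdef]
    rw [Finset.sum_add_distrib, ← Finset.smul_sum, ← Finset.smul_sum, hysum, hzsum, habx]
  have hWall := decomp_unique i hi hnb W hWT hWsum
  have hyz : ∀ j : Fin n, gy (j : ℕ) = Pi.single (i j) (1 : ℝ) ∧
      gz (j : ℕ) = Pi.single (i j) (1 : ℝ) := by
    intro j
    have h1 := congrFun (hWall j) (i j)
    rw [hWdef] at h1
    simp only [Pi.add_apply, Pi.smul_apply, smul_eq_mul, Pi.single_eq_same] at h1
    have hp1 : gy (j : ℕ) (i j) ≤ 1 := Tset.le_one (hgyT j) _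
    have hq1 : gz (j : ℕ) (i j) ≤ 1 := Tset.le_one (hgzT j) _
    have hp : gy (j : ℕ) (i j) = 1 := by nlinarith
    have hq : gz (j : ℕ) (i j) = 1 := by nlinarith
    exact ⟨Tset.eq_single (hgyT j) hp, Tset.eq_single (hgzT j) hq⟩
  constructor
  · rw [← hysum]
    exact Finset.sum_congr rfl fun j _ => (hyz j).1
  · rw [← hzsum]
    exact Finset.sum_congr rfl fun j _ => (hyz j).2

lemma pool_hull (n k s : ℕ) :
    poolPolytope n k s = convexHull ℝ (∑ j ∈ Finset.range n, Vset n k s j) := by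
  have h := map_sum (convexHullAddMonoidHom ℝ (Fin (s * (n - 1) + k) → ℝ))
    (fun j => Vset n k s j) (Finset.range n)
  simp only [convexHullAddMonoidHom_apply] at h
  rw [pool_eq, ← h]

end PoolAux

/-- `e_{i_0} + ⋯ + e_{i_{n-1}}` is a vertex of `P_{n,k,s}` iff there is no
consecutive 2-cycle; and every vertex arises from exactly one admissible tuple. -/
theorem vertex_iff_no_badPair (n k s : ℕ) (hn : 0 < n) (hs : 0 < s) (hks : s < k)
    (i : Fin n → Fin (s * (n - 1) + k))
    (hi : ∀ j : Fin n, s * (j : ℕ) ≤ (i j : ℕ) ∧ (i j : ℕ) < s * (j : ℕ) + k) :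
    ((∑ j : Fin n, Pi.single (i j) (1 : ℝ)) ∈
        Set.extremePoints ℝ (poolPolytope n k s) ↔ ¬ badPair n k s i) ∧
    (∀ x ∈ Set.extremePoints ℝ (poolPolytope n k s),
      ∃! i' : Fin n → Fin (s * (n - 1) + k),
        admissible n k s i' ∧ x = ∑ j : Fin n, Pi.single (i' j) (1 : ℝ)) := by
  classical
  constructor
  · constructor
    · intro hx
      by_contra hbad
      exact PoolAux.notExtreme_of_badPair i hi hbad hx
    · intro hnb
      exact PoolAux.extreme_of_not_badPair i hi hnb
  · intro x hx
    -- existence of a representing tuple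
    have hxS : x ∈ ∑ j ∈ Finset.range n, PoolAux.Vset n k s j := by
      have h1 : x ∈ Set.extremePoints ℝ
          (convexHull ℝ (∑ j ∈ Finset.range n, PoolAux.Vset n k s j)) := by
        rw [← PoolAux.pool_hull]
        exact hx
      exact extremePoints_convexHull_subset h1
    rw [Set.mem_finset_sum] at hxS
    obtain ⟨g, hg, hgsum⟩ := hxS
    have hch : ∀ j : Fin n, ∃ m : Fin (s * (n - 1) + k),
        s * (j : ℕ) ≤ (m : ℕ) ∧ (m : ℕ) < s * (j : ℕ) + k ∧
          g (j : ℕ) = Pi.single m (1 : ℝ) :=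
      fun j => hg (Finset.mem_range.2 j.isLt)
    set i' : Fin n → Fin (s * (n - 1) + k) := fun j => (hch j).choose with hi'def
    have hi'win : ∀ j : Fin n, s * (j : ℕ) ≤ (i' j : ℕ) ∧ (i' j : ℕ) < s * (j : ℕ) + k :=
      fun j => ⟨(hch j).choose_spec.1, (hch j).choose_spec.2.1⟩
    have hxrep : x = ∑ j : Fin n, Pi.single (i' j) (1 : ℝ) := by
      rw [← hgsum, ← Fin.sum_univ_eq_sum_range]
      exact Finset.sum_congr rfl fun j _ => (hch j).choose_spec.2.2
    have hi'nb : ¬ badPair n k s i' := by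
      intro hbad
      exact PoolAux.notExtreme_of_badPair i' hi'win hbad (hxrep ▸ hx)
    refine ⟨i', ⟨⟨hi'win, hi'nb⟩, hxrep⟩, ?_⟩
    rintro i'' ⟨⟨hi''win, hi''nb⟩, hxrep''⟩
    have hsum : (∑ j : Fin n, Pi.single (i' j) (1 : ℝ) : Fin (s * (n - 1) + k) → ℝ)
        = ∑ j : Fin n, Pi.single (i'' j) (1 : ℝ) := by rw [← hxrep, hxrep'']
    have hW : ∀ j : Fin n, Pi.single (i' j) (1 : ℝ) ∈ PoolAux.Tset n k s (j : ℕ) :=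
      fun j => PoolAux.Vset_subset_Tset n k s (j : ℕ)
        (PoolAux.single_mem_Vset _ (hi'win j).1 (hi'win j).2)
    have := PoolAux.decomp_unique i'' hi''win hi''nb
      (fun j => Pi.single (i' j) (1 : ℝ)) hW hsum
    funext j
    have hj := congrFun (this j) (i' j)
    rw [Pi.single_eq_same] at hj
    by_contra hne
    rw [Pi.single_eq_of_ne] at hj
    · exact one_ne_zero hj
    · intro h
      exact hne h.symm
end

section
/- Let n, k, s be positive integers with 1 < k ≤ s+1. Then the number of extreme points (vertices) of P_{n,k,s} is exactly k^n, i.e. b_n^{(k,s)} = k^n. -/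
open Pointwise

namespace PoolAux

/-- Selected coordinate of window `i`. -/
def Jf (s : ℕ) (σ : ℕ → ℕ) : ℕ → ℕ := fun i => s * i + σ i

/-- Integer weight recursion along windows. -/
def wgt (s k : ℕ) (J : ℕ → ℕ) : ℕ → ℤ
  | 0 => 0
  | i + 1 => wgt s k J i +
      (if J i = J (i + 1) then 0
       else if J (i + 1) < s * i + k then -1
       else if s * (i + 1) ≤ J i then 1 else 0)

variable {n s k : ℕ} {σ : ℕ → ℕ}

lemma J_lb (i : ℕ) : s * i ≤ Jf s σ i := Nat.le_add_right _ _

lemma J_ub (hσ : ∀ i, σ i < k) (i : ℕ) : Jf s σ i < s * i + k :=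
  Nat.add_lt_add_left (hσ i) _

/-- Overlapping windows must be adjacent and the common point is `s * i'`. -/
lemma inter_window (hs : 0 < s) (hks : k ≤ s + 1) {i i' j : ℕ} (hii : i < i')
    (h2 : j < s * i + k) (h3 : s * i' ≤ j) : i' = i + 1 ∧ j = s * i' := by
  have e1 : s * (i + 1) = s * i + s := by ring
  have h5 : s * i' ≤ s * (i + 1) := by omega
  have h6 : i' ≤ i + 1 := Nat.le_of_mul_le_mul_left h5 hs
  have h7 : i' = i + 1 := le_antisymm h6 hii
  subst h7
  omega

lemma wgt_bound (i : ℕ) :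
    -(i : ℤ) ≤ wgt s k (Jf s σ) i ∧ wgt s k (Jf s σ) i ≤ (i : ℤ) := by
  induction i with
  | zero => simp [wgt]
  | succ i ih =>
    simp only [wgt]
    push_cast
    split_ifs <;> omega

lemma wgt_welldef (hs : 0 < s) (hks : k ≤ s + 1) (hσ : ∀ i, σ i < k) {i i' : ℕ}
    (hii : i ≤ i') (hJ : Jf s σ i = Jf s σ i') :
    wgt s k (Jf s σ) i' = wgt s k (Jf s σ) i := by
  rcases eq_or_lt_of_le hii with rfl | hlt
  · rfl
  · have hub : Jf s σ i < s * i + k := J_ub hσ i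
    have hlb : s * i' ≤ Jf s σ i := hJ ▸ J_lb (σ := σ) i'
    obtain ⟨h1, _⟩ := inter_window hs hks hlt hub hlb
    subst h1
    have hJ' : Jf s σ i = Jf s σ (i + 1) := hJ
    simp [wgt, hJ']

/-- The weight vector certifying that the selection `σ` gives a vertex. -/
noncomputable def cwt (n s k : ℕ) (σ : ℕ → ℕ) : ℕ → ℝ := fun q =>
  haveI : Decidable (∃ i, i < n ∧ Jf s σ i = q) := Classical.dec _
  if h : ∃ i, i < n ∧ Jf s σ i = q then (((n : ℤ) + wgt s k (Jf s σ) h.choose : ℤ) : ℝ)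
  else 0

lemma cwt_J (hs : 0 < s) (hks : k ≤ s + 1) (hσ : ∀ i, σ i < k) {i : ℕ} (hi : i < n) :
    cwt n s k σ (Jf s σ i) = (((n : ℤ) + wgt s k (Jf s σ) i : ℤ) : ℝ) := by
  have h : ∃ i', i' < n ∧ Jf s σ i' = Jf s σ i := ⟨i, hi, rfl⟩
  rw [cwt, dif_pos h]
  obtain ⟨_, hfind⟩ := h.choose_spec
  rcases le_total h.choose i with hle | hle
  · rw [wgt_welldef hs hks hσ hle hfind]
  · rw [← wgt_welldef hs hks hσ hle hfind.symm]

lemma cwt_nosel {q : ℕ} (h : ¬ ∃ i, i < n ∧ Jf s σ i = q) : cwt n s k σ q = 0 := by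
  rw [cwt]
  exact dif_neg h

lemma cwt_argmax (hs : 0 < s) (hks : k ≤ s + 1) (hσ : ∀ i, σ i < k) {i q : ℕ}
    (hi : i < n) (hq1 : s * i ≤ q) (hq2 : q < s * i + k) (hne : q ≠ Jf s σ i) :
    cwt n s k σ q < cwt n s k σ (Jf s σ i) := by
  rw [cwt_J hs hks hσ hi]
  have hwb := wgt_bound (s := s) (k := k) (σ := σ) i
  by_cases h : ∃ i', i' < n ∧ Jf s σ i' = q
  · obtain ⟨i₀, hi₀, hJ₀⟩ := h
    rw [← hJ₀, cwt_J hs hks hσ hi₀]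
    have hne₀ : i₀ ≠ i := by rintro rfl; exact hne hJ₀.symm
    rw [Int.cast_lt]
    rcases lt_or_gt_of_ne hne₀ with hlt | hgt
    · -- i₀ < i : q = Jf i₀ lies in window i, so i = i₀ + 1, q = s * i, step was +1
      have hub : Jf s σ i₀ < s * i₀ + k := J_ub hσ i₀
      obtain ⟨h1, h2⟩ := inter_window hs hks hlt (hJ₀ ▸ hub) hq1
      have hb1 : ¬ Jf s σ i₀ = Jf s σ (i₀ + 1) := by
        rw [← h1, hJ₀]; exact fun hcon => hne hcon
      have hb2 : ¬ Jf s σ (i₀ + 1) < s * i₀ + k := by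
        rw [← h1]
        intro hcon
        obtain ⟨_, hc2⟩ := inter_window hs hks hlt hcon (J_lb (σ := σ) i)
        exact hne (h2.trans hc2.symm)
      have hb3 : s * (i₀ + 1) ≤ Jf s σ i₀ := by
        rw [← h1, hJ₀, h2, h1]
      have hw : wgt s k (Jf s σ) (i₀ + 1) = wgt s k (Jf s σ) i₀ + 1 := by
        rw [wgt, if_neg hb1, if_neg hb2, if_pos hb3]
      rw [h1] at *
      omega
    · -- i < i₀ : selection of window i₀ lies in window i, so i₀ = i + 1, step was -1
      have hlb : s * i₀ ≤ q := hJ₀ ▸ J_lb (σ := σ) i₀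
      obtain ⟨h1, h2⟩ := inter_window hs hks hgt hq2 hlb
      have hb1 : ¬ Jf s σ i = Jf s σ (i + 1) := by
        rw [← h1, hJ₀]; exact fun hcon => hne hcon.symm
      have hb2 : Jf s σ (i + 1) < s * i + k := by rw [← h1, hJ₀]; exact hq2
      have hw : wgt s k (Jf s σ) (i + 1) = wgt s k (Jf s σ) i + -1 := by
        rw [wgt, if_neg hb1, if_pos hb2]
      rw [h1]
      omega
  · rw [cwt_nosel h]
    have : (0 : ℤ) < (n : ℤ) + wgt s k (Jf s σ) i := by omega
    exact_mod_cast this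

/-- The coordinate `s*i + b` as an element of `Fin (s*(n-1)+k)`. -/
def idx (n k s : ℕ) (i : Fin n) (b : Fin k) : Fin (s * (n - 1) + k) :=
  ⟨s * i + b, by
    have h1 : (i : ℕ) ≤ n - 1 := by omega
    have h2 : s * (i : ℕ) ≤ s * (n - 1) := Nat.mul_le_mul_left s h1
    omega⟩

/-- The candidate vertex attached to a selection `σ`. -/
noncomputable def xpt (n k s : ℕ) (σ : Fin n → Fin k) : Fin (s * (n - 1) + k) → ℝ :=
  ∑ i : Fin n, Pi.single (idx n k s i (σ i)) (1 : ℝ)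

/-- The linear functional with weights `c`. -/
noncomputable def ell (n k s : ℕ) (c : ℕ → ℝ) : (Fin (s * (n - 1) + k) → ℝ) →ₗ[ℝ] ℝ where
  toFun v := ∑ q : Fin (s * (n - 1) + k), c q * v q
  map_add' u v := by
    simp [mul_add, Finset.sum_add_distrib]
  map_smul' r v := by
    simp only [Pi.smul_apply, smul_eq_mul, RingHom.id_apply, Finset.mul_sum]
    exact Finset.sum_congr rfl fun q _ => by ring

lemma ell_single (c : ℕ → ℝ) (j : Fin (s * (n - 1) + k)) :
    ell n k s c (Pi.single j 1) = c j := by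
  simp only [ell, LinearMap.coe_mk, AddHom.coe_mk]
  rw [Finset.sum_eq_single j]
  · simp
  · intro q _ hq
    simp [Pi.single_eq_of_ne hq]
  · simp

lemma ell_xpt (c : ℕ → ℝ) (σ : Fin n → Fin k) :
    ell n k s c (xpt n k s σ) = ∑ i : Fin n, c (s * i + σ i) := by
  rw [xpt, map_sum]
  exact Finset.sum_congr rfl fun i _ => ell_single c _

/-- Extension of a selection to `ℕ`. -/
def ext (n k : ℕ) (σ : Fin n → Fin k) : ℕ → ℕ := fun i =>
  if h : i < n then σ ⟨i, h⟩ else 0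

lemma ext_lt (hk : 0 < k) (σ : Fin n → Fin k) : ∀ i, ext n k σ i < k := by
  intro i
  rw [ext]
  split_ifs with h
  · exact (σ ⟨i, h⟩).isLt
  · exact hk

lemma Jf_ext (σ : Fin n → Fin k) (i : Fin n) :
    Jf s (ext n k σ) i = s * i + σ i := by
  simp [Jf, ext, i.isLt]

/-- The key separation: `cwt` strictly separates `xpt σ` from every other `xpt τ`. -/
lemma sep (hs : 0 < s) (hk : 1 < k) (hks : k ≤ s + 1) (σ τ : Fin n → Fin k)
    (hne : τ ≠ σ) :
    ell n k s (cwt n s k (ext n k σ)) (xpt n k s τ) <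
      ell n k s (cwt n s k (ext n k σ)) (xpt n k s σ) := by
  have hσ := ext_lt (n := n) (Nat.lt_of_lt_of_le Nat.one_pos hk.le) σ
  rw [ell_xpt, ell_xpt]
  have key : ∀ i : Fin n, τ i ≠ σ i →
      cwt n s k (ext n k σ) (s * i + τ i) < cwt n s k (ext n k σ) (s * i + σ i) := by
    intro i hti
    have h1 : cwt n s k (ext n k σ) (s * ↑i + ↑(σ i)) =
        cwt n s k (ext n k σ) (Jf s (ext n k σ) i) := by rw [Jf_ext]
    rw [h1]
    apply cwt_argmax hs hks hσ i.isLt (Nat.le_add_right _ _)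
      (Nat.add_lt_add_left (τ i).isLt _)
    rw [Jf_ext]
    intro hcon
    exact hti (Fin.ext (by omega))
  apply Finset.sum_lt_sum
  · intro i _
    by_cases hti : τ i = σ i
    · rw [hti]
    · exact (key i hti).le
  · obtain ⟨i, hi⟩ := Function.ne_iff.mp hne
    exact ⟨i, Finset.mem_univ i, key i hi⟩

lemma xpt_inj (hs : 0 < s) (hk : 1 < k) (hks : k ≤ s + 1) :
    Function.Injective (xpt n k s) := by
  intro τ σ h
  by_contra hne
  have hlt := sep hs hk hks σ τ hne
  rw [h] at hlt
  exact lt_irrefl _ hlt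

/-- Every candidate vertex is an extreme point of the convex hull of all of them. -/
lemma xpt_extreme (hs : 0 < s) (hk : 1 < k) (hks : k ≤ s + 1) (hn : 0 < n)
    (σ : Fin n → Fin k) :
    xpt n k s σ ∈ Set.extremePoints ℝ (convexHull ℝ (Set.range (xpt n k s))) := by
  set S := Set.range (xpt n k s) with hS
  set x := xpt n k s σ with hx
  set L := ell n k s (cwt n s k (ext n k σ)) with hL
  set M := L x with hM
  have hbound : ∀ y ∈ S, L y ≤ M := by
    rintro y ⟨τ, rfl⟩
    by_cases h : τ = σ
    · subst h; exact le_refl _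
    · exact (sep hs hk hks σ τ h).le
  have hAle : convexHull ℝ S ⊆ {y | L y ≤ M} :=
    convexHull_min hbound (convex_halfSpace_le (LinearMap.isLinear L) M)
  have hS'lt : convexHull ℝ (S \ {x}) ⊆ {y | L y < M} := by
    apply convexHull_min ?_ (convex_halfSpace_lt (LinearMap.isLinear L) M)
    rintro y ⟨⟨τ, rfl⟩, hy2⟩
    have hτ : τ ≠ σ := by rintro rfl; exact hy2 rfl
    exact sep hs hk hks σ τ hτ
  have hxS : x ∈ S := Set.mem_range_self σ
  have hk0 : 0 < k := Nat.lt_of_lt_of_le Nat.one_pos hk.le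
  have hS'ne : (S \ {x}).Nonempty := by
    set i₀ : Fin n := ⟨0, hn⟩
    set τ₀ : Fin n → Fin k := fun i =>
      if σ i = (⟨0, hk0⟩ : Fin k) then (⟨1, hk⟩ : Fin k) else ⟨0, hk0⟩ with hτ₀
    have hτ₀ne : τ₀ ≠ σ := by
      intro hcon
      have := congrFun hcon i₀
      rw [hτ₀] at this
      simp only at this
      split_ifs at this with h
      · rw [h] at this
        exact absurd (congrArg Fin.val this) (by simp)
      · exact h this.symm
    refine ⟨xpt n k s τ₀, Set.mem_range_self _, ?_⟩
    intro hcon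
    rw [Set.mem_singleton_iff] at hcon
    have hlt := sep hs hk hks σ τ₀ hτ₀ne
    rw [hcon] at hlt
    exact lt_irrefl _ hlt
  have huniq : ∀ y ∈ convexHull ℝ S, L y = M → y = x := by
    intro y hy hLy
    have hSdecomp : S = insert x (S \ {x}) := by
      rw [Set.insert_diff_singleton, Set.insert_eq_self.mpr hxS]
    rw [hSdecomp, convexHull_insert hS'ne, mem_convexJoin] at hy
    obtain ⟨a, ha, z, hz, hyz⟩ := hy
    rw [Set.mem_singleton_iff] at ha
    subst ha
    obtain ⟨p, q, hp, hq, hpq, rfl⟩ := hyz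
    have hLz : L z < M := hS'lt hz
    have hcomb : L (p • x + q • z) = p * M + q * L z := by
      rw [map_add, map_smul, map_smul]; simp [hM]
    rw [hcomb] at hLy
    have hpm : p * M + q * M = M := by rw [← add_mul, hpq, one_mul]
    have hq0 : q = 0 := by
      rcases eq_or_lt_of_le hq with h | h
      · exact h.symm
      · have := mul_lt_mul_of_pos_left hLz h
        linarith
    have hp1 : p = 1 := by rw [hq0, add_zero] at hpq; exact hpq
    rw [hq0, zero_smul, add_zero, hp1, one_smul]
  rw [mem_extremePoints]
  refine ⟨subset_convexHull ℝ S hxS, ?_⟩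
  intro x₁ hx₁ x₂ hx₂ hseg
  obtain ⟨p, q, hp, hq, hpq, hsum⟩ := hseg
  have h1 : L x₁ ≤ M := hAle hx₁
  have h2 : L x₂ ≤ M := hAle hx₂
  have hsumL : p * L x₁ + q * L x₂ = M := by
    have := congrArg L hsum
    rw [map_add, map_smul, map_smul] at this
    simpa using this
  have hpm : p * M + q * M = M := by rw [← add_mul, hpq, one_mul]
  have e1 : L x₁ = M := by
    rcases eq_or_lt_of_le h1 with h | h
    · exact h
    · have hlt := mul_lt_mul_of_pos_left h hp
      have h2' := mul_le_mul_of_nonneg_left h2 hq.le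
      linarith
  have e2 : L x₂ = M := by
    rcases eq_or_lt_of_le h2 with h | h
    · exact h
    · have hlt := mul_lt_mul_of_pos_left h hq
      have h1' := mul_le_mul_of_nonneg_left h1 hp.le
      linarith
  exact ⟨huniq x₁ hx₁ e1, huniq x₂ hx₂ e2⟩


lemma bridge (n k s : ℕ) :
    poolPolytope n k s = convexHull ℝ (Set.range (xpt n k s)) := by
  have h1 : poolPolytope n k s
      = ∑ i : Fin n, convexHull ℝ {v : Fin (s * (n - 1) + k) → ℝ |
          ∃ j : Fin (s * (n - 1) + k), s * (i : ℕ) ≤ (j : ℕ) ∧ (j : ℕ) < s * (i : ℕ) + k ∧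
            v = Pi.single j (1 : ℝ)} := by
    rw [poolPolytope, ← Fin.sum_univ_eq_sum_range]
  rw [h1, ← convexHull_sum]
  congr 1
  ext x
  rw [Set.mem_finset_sum]
  constructor
  · rintro ⟨g, hg, rfl⟩
    have hg' : ∀ i : Fin n, ∃ j : Fin (s * (n - 1) + k),
        s * (i : ℕ) ≤ (j : ℕ) ∧ (j : ℕ) < s * (i : ℕ) + k ∧ g i = Pi.single j 1 :=
      fun i => hg (Finset.mem_univ i)
    choose j hj1 hj2 hj3 using hg'
    refine ⟨fun i => ⟨(j i : ℕ) - s * i, by have := hj1 i; have := hj2 i; omega⟩, ?_⟩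
    rw [xpt]
    refine Finset.sum_congr rfl fun i _ => ?_
    rw [hj3 i]
    exact congrArg (fun t => Pi.single t (1 : ℝ))
      (Fin.ext (by simp only [idx]; have := hj1 i; omega))
  · rintro ⟨τ, rfl⟩
    refine ⟨fun i => Pi.single (idx n k s i (τ i)) 1, fun {i} _ =>
      ⟨idx n k s i (τ i), Nat.le_add_right _ _, Nat.add_lt_add_left (τ i).isLt _, rfl⟩, rfl⟩

end PoolAux

/-- if `1 < k ≤ s+1` then `P_{n,k,s}` has exactly `kⁿ` vertices. -/
theorem numVertices_of_small_window (n k s : ℕ) (hn : 0 < n) (hs : 0 < s)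
    (hk : 1 < k) (hks : k ≤ s + 1) :
    numVertices n k s = k ^ n := by
  rw [numVertices, PoolAux.bridge]
  have hext : Set.extremePoints ℝ (convexHull ℝ (Set.range (PoolAux.xpt n k s)))
      = Set.range (PoolAux.xpt n k s) := by
    apply Set.Subset.antisymm extremePoints_convexHull_subset
    rintro y ⟨σ, rfl⟩
    exact PoolAux.xpt_extreme hs hk hks hn σ
  rw [hext, Nat.card_range_of_injective (PoolAux.xpt_inj hs hk hks)]
  simp [Nat.card_eq_fintype_card, Fintype.card_fun]
end

section
/- Let n, k, s be positive integers with k ≥ s+1. Then the polytope P_{n,k,s} has dimension K−1, i.e. finrank ℝ (vectorSpan ℝ P_{n,k,s}) = s(n−1) + k − 1. -/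
open Pointwise

noncomputable def sumF (K : ℕ) : (Fin K → ℝ) →ₗ[ℝ] ℝ where
  toFun x := ∑ j, x j
  map_add' x y := by simp [Finset.sum_add_distrib]
  map_smul' c x := by simp [Finset.mul_sum]

lemma sumF_single {K : ℕ} (j : Fin K) : sumF K (Pi.single j 1) = 1 := by
  simp [sumF, Finset.sum_pi_single]

lemma finrank_ker_sumF {K : ℕ} (hK : 0 < K) :
    Module.finrank ℝ (LinearMap.ker (sumF K)) = K - 1 := by
  have hne : sumF K ≠ 0 := by
    intro h
    have := sumF_single (K := K) ⟨0, hK⟩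
    rw [h] at this
    simp at this
  have hsurj : Function.Surjective (sumF K) := LinearMap.surjective_of_ne_zero hne
  have h1 : LinearMap.range (sumF K) = ⊤ := LinearMap.range_eq_top.2 hsurj
  have := (sumF K).finrank_range_add_finrank_ker
  rw [h1] at this
  simp only [finrank_top, Module.finrank_self, Module.finrank_pi] at this
  simp [Module.finrank_pi] at this ⊢
  omega


/-- for `k ≥ s+1`, the polytope `P_{n,k,s}` is full-dimensional in the affine
hyperplane, i.e. has dimension `K − 1 = s(n−1)+k−1`. -/
theorem poolPolytope_dim (n k s : ℕ) (hn : 0 < n) (hs : 0 < s) (hk : s + 1 ≤ k) :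
    Module.finrank ℝ (vectorSpan ℝ (poolPolytope n k s)) = s * (n - 1) + k - 1 := by
  set K := s * (n - 1) + k with hKdef
  have hKpos : 0 < K := by omega
  set V := vectorSpan ℝ (poolPolytope n k s) with hV
  set ev : Fin K → (Fin K → ℝ) := fun j => Pi.single j 1 with hev
  set pt : (ℕ → Fin K) → (Fin K → ℝ) :=
    fun c => ∑ i ∈ Finset.range n, ev (c i) with hpt
  have hmem : ∀ c : ℕ → Fin K,
      (∀ i < n, s * i ≤ (c i : ℕ) ∧ (c i : ℕ) < s * i + k) →
      pt c ∈ poolPolytope n k s := by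
    intro c hc
    apply Set.finset_sum_mem_finset_sum
    intro i hi
    exact subset_convexHull ℝ _
      ⟨c i, (hc i (Finset.mem_range.1 hi)).1, (hc i (Finset.mem_range.1 hi)).2, rfl⟩
  -- every point of P has coordinate sum n
  have hsum1 : ∀ p ∈ poolPolytope n k s, sumF K p = n := by
    intro p hp
    rw [poolPolytope, Set.mem_finset_sum] at hp
    obtain ⟨g, hg, rfl⟩ := hp
    have h1 : ∀ i ∈ Finset.range n, sumF K (g i) = 1 := by
      intro i hi
      have hsub : convexHull ℝ {v : Fin K → ℝ |
          ∃ j : Fin K, s * i ≤ (j : ℕ) ∧ (j : ℕ) < s * i + k ∧ v = Pi.single j (1 : ℝ)}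
          ⊆ {x | sumF K x = 1} := by
        apply convexHull_min
        · rintro v ⟨j, -, -, rfl⟩
          exact sumF_single j
        · exact convex_hyperplane (sumF K).isLinear 1
      exact hsub (hg hi)
    rw [map_sum, Finset.sum_congr rfl h1]
    simp
  have hbase : ∀ i < n, s * i ≤ s * (n - 1) := fun i hi =>
    Nat.mul_le_mul_left s (by omega)
  -- differences of single vectors within a common window lie in V
  have hdiff : ∀ (i0 : ℕ), i0 < n → ∀ (j j' : Fin K),
      s * i0 ≤ (j : ℕ) → (j : ℕ) < s * i0 + k →
      s * i0 ≤ (j' : ℕ) → (j' : ℕ) < s * i0 + k →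
      ev j - ev j' ∈ V := by
    intro i0 hi0 j j' hj1 hj2 hj'1 hj'2
    classical
    set c : ℕ → Fin K := fun i => if i = i0 then j else ⟨min (s * i) (s * (n - 1)), by omega⟩
      with hc
    set c' : ℕ → Fin K := fun i => if i = i0 then j' else ⟨min (s * i) (s * (n - 1)), by omega⟩
      with hc'
    have hcw : ∀ i < n, s * i ≤ (c i : ℕ) ∧ (c i : ℕ) < s * i + k := by
      intro i hi
      by_cases h : i = i0
      · subst h; simp only [hc, if_pos rfl]; exact ⟨hj1, hj2⟩
      · simp only [hc, if_neg h]
        have := hbase i hi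
        simp only [min_eq_left this]
        omega
    have hcw' : ∀ i < n, s * i ≤ (c' i : ℕ) ∧ (c' i : ℕ) < s * i + k := by
      intro i hi
      by_cases h : i = i0
      · subst h; simp only [hc', if_pos rfl]; exact ⟨hj'1, hj'2⟩
      · simp only [hc', if_neg h]
        have := hbase i hi
        simp only [min_eq_left this]
        omega
    have hd : pt c - pt c' = ev j - ev j' := by
      rw [hpt]
      simp only [← Finset.sum_sub_distrib]
      rw [Finset.sum_eq_single_of_mem i0 (Finset.mem_range.2 hi0)]
      · simp [hc, hc']
      · intro i _ hne
        simp [hc, hc', if_neg hne]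
    rw [← hd]
    have := vsub_mem_vectorSpan ℝ (hmem c hcw) (hmem c' hcw')
    rwa [vsub_eq_sub] at this
  -- adjacent differences lie in V
  have hadj : ∀ m : ℕ, ∀ hm : m + 1 < K,
      ev ⟨m, by omega⟩ - ev ⟨m + 1, hm⟩ ∈ V := by
    intro m hm
    have hdm : s * (m / s) + m % s = m := Nat.div_add_mod m s
    have hml : m % s < s := Nat.mod_lt m hs
    rcases le_total (m / s) (n - 1) with h | h
    · exact hdiff (m / s) (by omega) ⟨m, by omega⟩ ⟨m + 1, hm⟩
        (by show s * (m / s) ≤ m; omega) (by show m < s * (m / s) + k; omega)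
        (by show s * (m / s) ≤ m + 1; omega) (by show m + 1 < s * (m / s) + k; omega)
    · have hb : s * (n - 1) ≤ s * (m / s) := Nat.mul_le_mul_left s h
      exact hdiff (n - 1) (by omega) ⟨m, by omega⟩ ⟨m + 1, hm⟩
        (by show s * (n - 1) ≤ m; omega) (by show m < s * (n - 1) + k; omega)
        (by show s * (n - 1) ≤ m + 1; omega) (by show m + 1 < s * (n - 1) + k; omega)
  -- telescoping
  have hchain : ∀ m : ℕ, ∀ hm : m < K, ev ⟨m, hm⟩ - ev ⟨0, hKpos⟩ ∈ V := by
    intro m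
    induction m with
    | zero => intro hm; simp only [sub_self]; exact Submodule.zero_mem V
    | succ m ih =>
      intro hm
      have hm' : m < K := by omega
      have h1 := ih hm'
      have h2 := hadj m hm
      have heq : ev ⟨m + 1, hm⟩ - ev ⟨0, hKpos⟩ =
          (ev ⟨m, hm'⟩ - ev ⟨0, hKpos⟩) - (ev ⟨m, hm'⟩ - ev ⟨m + 1, hm⟩) := by abel
      rw [heq]
      exact Submodule.sub_mem V h1 h2
  have hsingle : ∀ j : Fin K, ev j - ev ⟨0, hKpos⟩ ∈ V := by
    intro j
    have := hchain j.1 j.2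
    simpa using this
  -- V = ker (sumF K)
  have hVker : V = LinearMap.ker (sumF K) := by
    apply le_antisymm
    · rw [hV, vectorSpan_def, Submodule.span_le]
      rintro v hv
      rw [Set.mem_vsub] at hv
      obtain ⟨p, hp, q, hq, rfl⟩ := hv
      simp only [SetLike.mem_coe, LinearMap.mem_ker, vsub_eq_sub, map_sub,
        hsum1 p hp, hsum1 q hq, sub_self]
    · intro x hx
      rw [LinearMap.mem_ker] at hx
      have hx0 : ∑ j, x j = 0 := hx
      have hxeq : x = ∑ j : Fin K, x j • (ev j - ev ⟨0, hKpos⟩) := by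
        simp only [smul_sub, Finset.sum_sub_distrib, ← Finset.sum_smul, hx0, zero_smul,
          sub_zero]
        have h2 : ∀ j : Fin K, x j • ev j = Pi.single j (x j) := by
          intro j
          rw [hev]
          rw [← Pi.single_smul, smul_eq_mul, mul_one]
        simp only [h2]
        rw [show (∑ i, x i) = 0 from hx0, zero_smul, sub_zero]
        exact (Finset.univ_sum_single x).symm
      rw [hxeq]
      exact Submodule.sum_mem V fun j _ => Submodule.smul_mem V _ (hsingle j)
  rw [hVker, finrank_ker_sumF hKpos]
end

section
/- Let n, k, s be positive integers with n ≥ 2 and 1 < k ≤ s+1. Then the number of facets of P_{n,k,s} is k·n; that is, the number of nonempty exposed faces F of P_{n,k,s} with F ≠ P_{n,k,s} and finrank ℝ (vectorSpan ℝ F) = finrank ℝ (vectorSpan ℝ P_{n,k,s}) − 1 equals k·n. -/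
open Pointwise

def IsFacetOfPool (n k s : ℕ) (F : Set (Fin (s * (n - 1) + k) → ℝ)) : Prop :=
  (∃ ℓ : (Fin (s * (n - 1) + k) → ℝ) →ₗ[ℝ] ℝ,
      F = {x ∈ poolPolytope n k s | ∀ y ∈ poolPolytope n k s, ℓ y ≤ ℓ x}) ∧
    F.Nonempty ∧ F ≠ poolPolytope n k s ∧
    Module.finrank ℝ (vectorSpan ℝ F) =
      Module.finrank ℝ (vectorSpan ℝ (poolPolytope n k s)) - 1

namespace PoolAux

open Finset

/-! ### general convexity helpers -/

section ConvexHelpers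

variable {V : Type*} [AddCommGroup V] [Module ℝ V]

theorem hull_le {S : Set V} {ℓ : V →ₗ[ℝ] ℝ} {M : ℝ} (h : ∀ v ∈ S, ℓ v ≤ M) :
    ∀ x ∈ convexHull ℝ S, ℓ x ≤ M := fun _ hx =>
  convexHull_min h (convex_halfSpace_le (LinearMap.isLinear ℓ) M) hx

theorem hull_eq_const {S : Set V} {ℓ : V →ₗ[ℝ] ℝ} {M : ℝ} (h : ∀ v ∈ S, ℓ v = M) :
    ∀ x ∈ convexHull ℝ S, ℓ x = M := fun _ hx =>
  convexHull_min h (convex_hyperplane (LinearMap.isLinear ℓ) M) hx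

theorem mem_hull_filter {t : Finset V} {ℓ : V →ₗ[ℝ] ℝ} {M : ℝ}
    (hle : ∀ v ∈ t, ℓ v ≤ M) {x : V} (hx : x ∈ convexHull ℝ (t : Set V)) (hM : ℓ x = M) :
    x ∈ convexHull ℝ ((t.filter fun v => ℓ v = M) : Set V) := by
  classical
  rw [Finset.convexHull_eq] at hx
  obtain ⟨w, hw0, hw1, rfl⟩ := hx
  rw [Finset.centerMass_eq_of_sum_1 _ _ hw1] at hM ⊢
  simp only [id_eq] at hM ⊢
  have hlin : ℓ (∑ v ∈ t, w v • v) = ∑ v ∈ t, w v * ℓ v := by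
    rw [map_sum]; exact Finset.sum_congr rfl fun v _ => by rw [map_smul, smul_eq_mul]
  have hsum : ∑ v ∈ t, w v * (M - ℓ v) = 0 := by
    have : ∑ v ∈ t, w v * (M - ℓ v) = M * (∑ v ∈ t, w v) - ∑ v ∈ t, w v * ℓ v := by
      rw [Finset.mul_sum, ← Finset.sum_sub_distrib]
      exact Finset.sum_congr rfl fun v _ => by ring
    rw [this, hw1, ← hlin, hM]; ring
  have hzero : ∀ v ∈ t, v ∉ t.filter (fun v => ℓ v = M) → w v = 0 := by
    intro v hv hvn
    have h1 : ∀ v ∈ t, 0 ≤ w v * (M - ℓ v) := fun v hv =>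
      mul_nonneg (hw0 v hv) (sub_nonneg.2 (hle v hv))
    have h2 := (Finset.sum_eq_zero_iff_of_nonneg h1).1 hsum v hv
    simp only [Finset.mem_filter, hv, true_and] at hvn
    rcases mul_eq_zero.1 h2 with h | h
    · exact h
    · exact absurd (by linarith [sub_eq_zero.1 h]) hvn
  have hw1' : ∑ v ∈ t.filter (fun v => ℓ v = M), w v = 1 := by
    rw [← hw1]
    exact Finset.sum_subset (Finset.filter_subset _ _) (fun v hv hvn => hzero v hv hvn)
  have hxeq : ∑ v ∈ t, w v • v = ∑ v ∈ t.filter (fun v => ℓ v = M), w v • v :=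
    (Finset.sum_subset (Finset.filter_subset _ _)
      (fun v hv hvn => by rw [hzero v hv hvn, zero_smul])).symm
  rw [hxeq]
  have := Finset.centerMass_mem_convexHull (t.filter fun v => ℓ v = M)
      (fun v hv => hw0 v (Finset.mem_filter.1 hv).1) (by rw [hw1']; norm_num)
      (fun v hv => Finset.mem_coe.2 hv)
  rw [Finset.centerMass_eq_of_sum_1 _ _ hw1'] at this
  simpa using this

theorem sub_mem_span_of_mem_hull {t : Finset V} {c x : V} (hx : x ∈ convexHull ℝ (t : Set V)) :
    x - c ∈ Submodule.span ℝ ((fun v => v - c) '' (t : Set V)) := by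
  classical
  rw [Finset.convexHull_eq] at hx
  obtain ⟨w, hw0, hw1, rfl⟩ := hx
  rw [Finset.centerMass_eq_of_sum_1 _ _ hw1]
  simp only [id_eq]
  have heq : (∑ v ∈ t, w v • v) - c = ∑ v ∈ t, w v • (v - c) := by
    have : ∑ v ∈ t, w v • (v - c) = (∑ v ∈ t, w v • v) - (∑ v ∈ t, w v) • c := by
      rw [Finset.sum_smul, ← Finset.sum_sub_distrib]
      exact Finset.sum_congr rfl fun v _ => by rw [smul_sub]
    rw [this, hw1, one_smul]
  rw [heq]
  exact Submodule.sum_mem _ fun v hv => Submodule.smul_mem _ _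
    (Submodule.subset_span ⟨v, by simpa using hv, rfl⟩)

end ConvexHelpers

theorem linearIndependent_triangular {m : ℕ} {ι : Type*} (b q : ι → Fin m)
    (hb : Function.Injective b) (hlt : ∀ i, b i < q i) :
    LinearIndependent ℝ (fun i => (Pi.single (b i) 1 : Fin m → ℝ) - Pi.single (q i) 1) := by
  classical
  rw [linearIndependent_iff']
  intro S g hsum i hi
  suffices h : ∀ N, ∀ i ∈ S, (b i : ℕ) < N → g i = 0 from h m i hi (b i).2
  intro N
  induction N with
  | zero => intro i hi h; omega
  | succ N ih =>
    intro i hi hN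
    rcases Nat.lt_or_ge (b i : ℕ) N with h | h
    · exact ih i hi h
    have hbiN : (b i : ℕ) = N := by omega
    have hval : ∑ i' ∈ S,
        g i' * ((if b i = b i' then (1:ℝ) else 0) - (if b i = q i' then 1 else 0)) = 0 := by
      have h0 := congrFun hsum (b i)
      rw [Finset.sum_apply] at h0
      simpa [Pi.single_apply] using h0
    rw [Finset.sum_eq_single_of_mem i hi ?_] at hval
    · have hqi : b i ≠ q i := ne_of_lt (hlt i)
      simpa [hqi] using hval
    · intro i' hi' hne
      have hbb : b i ≠ b i' := fun hE => hne (hb hE.symm)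
      by_cases hq : b i = q i'
      · have hlt' : (b i' : ℕ) < N := by
          have h2 := hlt i'
          rw [← hq] at h2
          have h3 := Fin.lt_def.mp h2
          omega
        rw [ih i' hi' hlt']
        simp
      · simp [hbb, hq]

/-! ### the basic objects -/

variable (n k s : ℕ)

noncomputable def E (j : Fin (s * (n - 1) + k)) : Fin (s * (n - 1) + k) → ℝ := Pi.single j 1

def Wf (t : ℕ) : Finset (Fin (s * (n - 1) + k)) :=
  Finset.univ.filter fun j => s * t ≤ (j : ℕ) ∧ (j : ℕ) < s * t + k

noncomputable def faceOf (A : ℕ → Finset (Fin (s * (n - 1) + k))) :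
    Set (Fin (s * (n - 1) + k) → ℝ) :=
  ∑ t ∈ Finset.range n, convexHull ℝ (E n k s '' ↑(A t))

noncomputable def vtx (c : ℕ → Fin (s * (n - 1) + k)) : Fin (s * (n - 1) + k) → ℝ :=
  ∑ t ∈ Finset.range n, E n k s (c t)

variable {n k s}

theorem mem_Wf {t : ℕ} {j : Fin (s * (n - 1) + k)} :
    j ∈ Wf n k s t ↔ s * t ≤ (j : ℕ) ∧ (j : ℕ) < s * t + k := by
  simp [Wf]

theorem E_inj : Function.Injective (E n k s) := by
  intro a b h
  by_contra hne
  have := congrFun h a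
  simp [E, Pi.single_apply, hne, (fun h' => hne h'.symm : ¬ b = a)] at this

theorem pool_eq_faceOf : poolPolytope n k s = faceOf n k s (Wf n k s) := by
  unfold poolPolytope faceOf
  refine Finset.sum_congr rfl fun t _ => ?_
  congr 1
  ext v
  constructor
  · rintro ⟨j, h1, h2, rfl⟩
    exact ⟨j, Finset.mem_coe.mpr (mem_Wf.mpr ⟨h1, h2⟩), rfl⟩
  · rintro ⟨j, hj, rfl⟩
    obtain ⟨h1, h2⟩ := mem_Wf.mp (Finset.mem_coe.mp hj)
    exact ⟨j, h1, h2, rfl⟩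

theorem card_Wf (hn : 1 ≤ n) {t : ℕ} (ht : t < n) : (Wf n k s t).card = k := by
  classical
  have hb : s * t + k ≤ s * (n - 1) + k := by
    have : s * t ≤ s * (n - 1) := Nat.mul_le_mul_left s (by omega)
    omega
  have himg : (Wf n k s t).image (Fin.val) = Finset.Ico (s * t) (s * t + k) := by
    ext m
    simp only [Finset.mem_image, Finset.mem_Ico]
    constructor
    · rintro ⟨j, hj, rfl⟩; exact mem_Wf.mp hj
    · rintro ⟨h1, h2⟩
      exact ⟨⟨m, by omega⟩, mem_Wf.mpr ⟨h1, h2⟩, rfl⟩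
  have hc := Finset.card_image_of_injective (Wf n k s t) Fin.val_injective
  rw [himg, Nat.card_Ico] at hc
  omega

theorem Wf_nonempty (hn : 1 ≤ n) (hk : 0 < k) {t : ℕ} (ht : t < n) :
    (Wf n k s t).Nonempty := by
  rw [← Finset.card_pos, card_Wf hn ht]; exact hk

theorem wf_overlap (hs : 0 < s) (hks : k ≤ s + 1) {t t' : ℕ} (htt : t < t')
    {j : Fin (s * (n - 1) + k)} (hj : j ∈ Wf n k s t) (hj' : j ∈ Wf n k s t') :
    t' = t + 1 ∧ (j : ℕ) = s * t + s ∧ k = s + 1 := by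
  rw [mem_Wf] at hj hj'
  obtain ⟨h1, h2⟩ := hj
  obtain ⟨h3, h4⟩ := hj'
  have e1 : s * (t + 1) = s * t + s := by ring
  have l1 : s * (t + 1) ≤ s * t' := Nat.mul_le_mul_left s (by omega)
  have ht' : t' = t + 1 := by
    by_contra hne
    have l2 : s * (t + 2) ≤ s * t' := Nat.mul_le_mul_left s (by omega)
    have e2 : s * (t + 2) = s * t + s + s := by ring
    have : s * t + s + s ≤ (j : ℕ) := by rw [← e2]; exact le_trans l2 h3
    omega
  subst ht'
  rw [e1] at l1
  exact ⟨rfl, by omega, by omega⟩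

/-! ### membership in `faceOf` -/

theorem faceOf_subset {A B : ℕ → Finset (Fin (s * (n - 1) + k))}
    (h : ∀ t ∈ Finset.range n, A t ⊆ B t) : faceOf n k s A ⊆ faceOf n k s B :=
  Set.finset_sum_subset_finset_sum _ _ _ fun t ht =>
    convexHull_mono (Set.image_mono (Finset.coe_subset.mpr (h t ht)))

theorem vtx_mem {A : ℕ → Finset (Fin (s * (n - 1) + k))} {c : ℕ → Fin (s * (n - 1) + k)}
    (hc : ∀ t ∈ Finset.range n, c t ∈ A t) : vtx n k s c ∈ faceOf n k s A :=
  Set.finset_sum_mem_finset_sum _ _ _ fun t ht =>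
    subset_convexHull ℝ _ ⟨c t, by simpa using hc t ht, rfl⟩

theorem faceOf_le {A : ℕ → Finset (Fin (s * (n - 1) + k))}
    {ℓ : (Fin (s * (n - 1) + k) → ℝ) →ₗ[ℝ] ℝ} {M : ℕ → ℝ}
    (h : ∀ t ∈ Finset.range n, ∀ j ∈ A t, ℓ (E n k s j) ≤ M t) :
    ∀ x ∈ faceOf n k s A, ℓ x ≤ ∑ t ∈ Finset.range n, M t := by
  intro x hx
  obtain ⟨g, hg, rfl⟩ := (Set.mem_finset_sum _ _ _).mp hx
  rw [map_sum]
  refine Finset.sum_le_sum fun t ht => hull_le ?_ _ (hg ht)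
  intro v hv
  obtain ⟨j, hj, rfl⟩ := hv
  exact h t ht j (by simpa using hj)

theorem faceOf_eq_const {A : ℕ → Finset (Fin (s * (n - 1) + k))}
    {ℓ : (Fin (s * (n - 1) + k) → ℝ) →ₗ[ℝ] ℝ} {M : ℕ → ℝ}
    (h : ∀ t ∈ Finset.range n, ∀ j ∈ A t, ℓ (E n k s j) = M t) :
    ∀ x ∈ faceOf n k s A, ℓ x = ∑ t ∈ Finset.range n, M t := by
  intro x hx
  obtain ⟨g, hg, rfl⟩ := (Set.mem_finset_sum _ _ _).mp hx
  rw [map_sum]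
  refine Finset.sum_congr rfl fun t ht => hull_eq_const ?_ _ (hg ht)
  intro v hv
  obtain ⟨j, hj, rfl⟩ := hv
  exact h t ht j (by simpa using hj)

/-! ### the main face computation -/

theorem face_eq (hn : 1 ≤ n) (hk : 0 < k)
    {ℓ : (Fin (s * (n - 1) + k) → ℝ) →ₗ[ℝ] ℝ}
    {A : ℕ → Finset (Fin (s * (n - 1) + k))} {M : ℕ → ℝ}
    (hAW : ∀ t ∈ Finset.range n, A t ⊆ Wf n k s t)
    (hAne : ∀ t ∈ Finset.range n, (A t).Nonempty)
    (hle : ∀ t ∈ Finset.range n, ∀ j ∈ Wf n k s t, ℓ (E n k s j) ≤ M t)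
    (hmem : ∀ t ∈ Finset.range n, ∀ j ∈ Wf n k s t, (j ∈ A t ↔ ℓ (E n k s j) = M t)) :
    {x ∈ poolPolytope n k s | ∀ y ∈ poolPolytope n k s, ℓ y ≤ ℓ x} = faceOf n k s A := by
  classical
  have hconst : ∀ t ∈ Finset.range n, ∀ j ∈ A t, ℓ (E n k s j) = M t :=
    fun t ht j hj => (hmem t ht j (hAW t ht hj)).mp hj
  have hP : poolPolytope n k s = faceOf n k s (Wf n k s) := pool_eq_faceOf
  have hsubset : faceOf n k s A ⊆ poolPolytope n k s := by
    rw [hP]; exact faceOf_subset hAW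
  have hub : ∀ y ∈ poolPolytope n k s, ℓ y ≤ ∑ t ∈ Finset.range n, M t := by
    rw [hP]; exact faceOf_le hle
  -- a maximizer inside `faceOf A`
  have hKpos : 0 < s * (n - 1) + k := by omega
  set c : ℕ → Fin (s * (n - 1) + k) :=
    fun t => if h : (A t).Nonempty then h.choose else ⟨0, hKpos⟩ with hc
  have hcA : ∀ t ∈ Finset.range n, c t ∈ A t := by
    intro t ht
    rw [hc]
    simp only [dif_pos (hAne t ht)]
    exact (hAne t ht).choose_spec
  have hx0 : vtx n k s c ∈ faceOf n k s A := vtx_mem hcA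
  ext x
  simp only [Set.mem_setOf_eq]
  constructor
  · rintro ⟨hxP, hxmax⟩
    have hxM : ℓ x = ∑ t ∈ Finset.range n, M t := by
      refine le_antisymm (hub x hxP) ?_
      have := hxmax _ (hsubset hx0)
      rwa [faceOf_eq_const hconst _ hx0] at this
    rw [hP] at hxP
    obtain ⟨g, hg, rfl⟩ := (Set.mem_finset_sum _ _ _).mp hxP
    have hgle : ∀ t ∈ Finset.range n, ℓ (g t) ≤ M t := by
      intro t ht
      refine hull_le ?_ _ (hg ht)
      intro v hv
      obtain ⟨j, hj, rfl⟩ := hv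
      exact hle t ht j (by simpa using hj)
    have hsum : ∑ t ∈ Finset.range n, ℓ (g t) = ∑ t ∈ Finset.range n, M t := by
      rw [← map_sum]; exact hxM
    have hgeq : ∀ t ∈ Finset.range n, ℓ (g t) = M t :=
      (Finset.sum_eq_sum_iff_of_le hgle).mp hsum
    refine (Set.mem_finset_sum _ _ _).mpr ⟨g, ?_, rfl⟩
    intro t ht
    have hgt : g t ∈ convexHull ℝ (((Wf n k s t).image (E n k s) : Finset _) : Set _) := by
      rw [Finset.coe_image]; exact hg ht
    have hflt := mem_hull_filter (t := (Wf n k s t).image (E n k s)) (ℓ := ℓ) (M := M t)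
      (fun v hv => by
        obtain ⟨j, hj, rfl⟩ := Finset.mem_image.mp hv
        exact hle t ht j hj) hgt (hgeq t ht)
    have hset : ((Wf n k s t).image (E n k s)).filter (fun v => ℓ v = M t)
        = (A t).image (E n k s) := by
      ext v
      simp only [Finset.mem_filter, Finset.mem_image]
      constructor
      · rintro ⟨⟨j, hj, rfl⟩, hv⟩; exact ⟨j, (hmem t ht j hj).mpr hv, rfl⟩
      · rintro ⟨j, hj, rfl⟩
        exact ⟨⟨j, hAW t ht hj, rfl⟩, hconst t ht j hj⟩
    rw [hset, Finset.coe_image] at hflt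
    exact hflt
  · intro hxA
    refine ⟨hsubset hxA, fun y hy => ?_⟩
    rw [faceOf_eq_const hconst x hxA]
    exact hub y hy


/-! ### dimension of a face -/

set_option maxHeartbeats 1000000 in
theorem finrank_faceOf (hn : 1 ≤ n) (hs : 0 < s) (hk : 0 < k) (hks : k ≤ s + 1)
    {A : ℕ → Finset (Fin (s * (n - 1) + k))}
    (hAW : ∀ t ∈ Finset.range n, A t ⊆ Wf n k s t)
    (hAne : ∀ t ∈ Finset.range n, (A t).Nonempty) :
    Module.finrank ℝ (vectorSpan ℝ (faceOf n k s A)) =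
      ∑ t ∈ Finset.range n, ((A t).card - 1) := by
  classical
  have hKpos : 0 < s * (n - 1) + k := by omega
  set top : ℕ → Fin (s * (n - 1) + k) :=
    fun t => if h : (A t).Nonempty then (A t).max' h else ⟨0, hKpos⟩ with htop
  have htopA : ∀ t ∈ Finset.range n, top t ∈ A t := by
    intro t ht
    rw [htop]
    simp only [dif_pos (hAne t ht)]
    exact Finset.max'_mem _ _
  have htople : ∀ t ∈ Finset.range n, ∀ j ∈ A t, j ≤ top t := by
    intro t ht j hj
    rw [htop]
    simp only [dif_pos (hAne t ht)]
    exact Finset.le_max' _ _ hj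
  -- upper bound
  set B : Finset (Fin (s * (n - 1) + k) → ℝ) :=
    (Finset.range n).biUnion
      (fun t => ((A t).erase (top t)).image (fun j => E n k s j - E n k s (top t))) with hB
  have hcardB : B.card ≤ ∑ t ∈ Finset.range n, ((A t).card - 1) := by
    refine le_trans Finset.card_biUnion_le (Finset.sum_le_sum fun t ht => ?_)
    refine le_trans Finset.card_image_le ?_
    rw [Finset.card_erase_of_mem (htopA t ht)]
  have hspan : vectorSpan ℝ (faceOf n k s A) ≤ Submodule.span ℝ (B : Set _) := by
    rw [vectorSpan_def, Submodule.span_le]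
    intro v hv
    rw [Set.mem_vsub] at hv
    obtain ⟨x, hx, y, hy, rfl⟩ := hv
    obtain ⟨g, hg, rfl⟩ := (Set.mem_finset_sum _ _ _).mp hx
    obtain ⟨g', hg', rfl⟩ := (Set.mem_finset_sum _ _ _).mp hy
    have hdec : (∑ t ∈ Finset.range n, g t) -ᵥ (∑ t ∈ Finset.range n, g' t)
        = ∑ t ∈ Finset.range n, (g t - g' t) := by
      rw [vsub_eq_sub, Finset.sum_sub_distrib]
    rw [hdec, SetLike.mem_coe]
    refine Submodule.sum_mem _ fun t ht => ?_
    have hsub1 : Submodule.span ℝ ((fun v => v - E n k s (top t)) '' ((A t).image (E n k s) : Set _))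
        ≤ Submodule.span ℝ (B : Set _) := by
      rw [Submodule.span_le]
      rintro w ⟨v, hv, rfl⟩
      rw [Finset.coe_image] at hv
      obtain ⟨j, hj, rfl⟩ := hv
      by_cases hjt : j = top t
      · subst hjt
        simp only [sub_self]
        exact Submodule.zero_mem _
      · refine SetLike.mem_coe.mpr (Submodule.subset_span ?_)
        refine Finset.mem_coe.mpr (Finset.mem_biUnion.mpr ⟨t, ht, ?_⟩)
        exact Finset.mem_image.mpr ⟨j, Finset.mem_erase.mpr ⟨hjt, by simpa using hj⟩, rfl⟩
    have hgt : g t ∈ convexHull ℝ (((A t).image (E n k s) : Finset _) : Set _) := by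
      rw [Finset.coe_image]; exact hg ht
    have hgt' : g' t ∈ convexHull ℝ (((A t).image (E n k s) : Finset _) : Set _) := by
      rw [Finset.coe_image]; exact hg' ht
    have h1 := sub_mem_span_of_mem_hull (c := E n k s (top t)) hgt
    have h2 := sub_mem_span_of_mem_hull (c := E n k s (top t)) hgt'
    have : g t - g' t = (g t - E n k s (top t)) - (g' t - E n k s (top t)) := by ring_nf
    rw [this]
    exact Submodule.sub_mem _ (hsub1 h1) (hsub1 h2)
  have hupper : Module.finrank ℝ (vectorSpan ℝ (faceOf n k s A))
      ≤ ∑ t ∈ Finset.range n, ((A t).card - 1) := by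
    refine le_trans (Submodule.finrank_mono hspan) (le_trans ?_ hcardB)
    exact finrank_span_finset_le_card B
  -- lower bound
  set Fs : Finset ((_ : ℕ) × Fin (s * (n - 1) + k)) :=
    (Finset.range n).sigma (fun t => (A t).erase (top t)) with hFs
  have hFscard : Fs.card = ∑ t ∈ Finset.range n, ((A t).card - 1) := by
    rw [hFs, Finset.card_sigma]
    exact Finset.sum_congr rfl fun t ht => by rw [Finset.card_erase_of_mem (htopA t ht)]
  have hFsmem : ∀ p ∈ Fs, p.1 ∈ Finset.range n ∧ p.2 ∈ (A p.1).erase (top p.1) := by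
    intro p hp
    exact Finset.mem_sigma.mp hp
  -- the independent family
  have hb_lt : ∀ p ∈ Fs, p.2 < top p.1 := by
    intro p hp
    obtain ⟨hp1, hp2⟩ := hFsmem p hp
    obtain ⟨hne, hmem⟩ := Finset.mem_erase.mp hp2
    exact lt_of_le_of_ne (htople _ hp1 _ hmem) hne
  have hb_inj : ∀ p ∈ Fs, ∀ p' ∈ Fs, p.2 = p'.2 → p = p' := by
    rintro ⟨a, b⟩ hp ⟨a', b'⟩ hp' hpp
    set p : (_ : ℕ) × Fin (s * (n - 1) + k) := ⟨a, b⟩ with hpdef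
    set p' : (_ : ℕ) × Fin (s * (n - 1) + k) := ⟨a', b'⟩ with hpdef'
    obtain ⟨hp1, hp2⟩ := hFsmem p hp
    obtain ⟨hp1', hp2'⟩ := hFsmem p' hp'
    rcases Nat.lt_trichotomy p.1 p'.1 with hlt | heq | hlt
    · exfalso
      have hjW : p.2 ∈ Wf n k s p.1 := hAW _ hp1 (Finset.mem_erase.mp hp2).2
      have hjW' : p.2 ∈ Wf n k s p'.1 := by
        rw [hpp]; exact hAW _ hp1' (Finset.mem_erase.mp hp2').2
      obtain ⟨he1, he2, he3⟩ := wf_overlap hs hks hlt hjW hjW'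
      -- p.2 is the max of Wf p.1, hence equals top p.1
      have htw : top p.1 ∈ Wf n k s p.1 := hAW _ hp1 (htopA _ hp1)
      have h5 := (mem_Wf.mp htw).2
      have h6 := hb_lt p hp
      have h7 : (p.2 : ℕ) < (top p.1 : ℕ) := h6
      omega
    · -- same window
      have ha : a = a' := heq
      have hb : b = b' := hpp
      subst ha; subst hb; rfl
    · exfalso
      have hjW : p.2 ∈ Wf n k s p'.1 := by
        rw [hpp]; exact hAW _ hp1' (Finset.mem_erase.mp hp2').2
      have hjW' : p.2 ∈ Wf n k s p.1 := hAW _ hp1 (Finset.mem_erase.mp hp2).2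
      obtain ⟨he1, he2, he3⟩ := wf_overlap hs hks hlt hjW hjW'
      have htw : top p'.1 ∈ Wf n k s p'.1 := hAW _ hp1' (htopA _ hp1')
      have h5 := (mem_Wf.mp htw).2
      have h6 := hb_lt p' hp'
      have h7 : (p'.2 : ℕ) < (top p'.1 : ℕ) := h6
      omega
  -- each difference vector lies in the vectorSpan
  have hvecmem : ∀ p ∈ Fs,
      (Pi.single p.2 1 : Fin (s * (n - 1) + k) → ℝ) - Pi.single (top p.1) 1
        ∈ vectorSpan ℝ (faceOf n k s A) := by
    intro p hp
    obtain ⟨hp1, hp2⟩ := hFsmem p hp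
    set c1 : ℕ → Fin (s * (n - 1) + k) := fun u => if u = p.1 then p.2 else top u with hc1
    have hv1 : vtx n k s c1 ∈ faceOf n k s A := by
      refine vtx_mem fun u hu => ?_
      rw [hc1]
      by_cases hup : u = p.1
      · subst hup; simp only [if_pos rfl]; exact (Finset.mem_erase.mp hp2).2
      · simp only [if_neg hup]; exact htopA u hu
    have hv2 : vtx n k s top ∈ faceOf n k s A := vtx_mem fun u hu => htopA u hu
    have hdiff : vtx n k s c1 - vtx n k s top
        = (Pi.single p.2 1 : Fin (s * (n - 1) + k) → ℝ) - Pi.single (top p.1) 1 := by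
      rw [vtx, vtx, ← Finset.sum_sub_distrib]
      rw [Finset.sum_eq_single_of_mem p.1 hp1 ?_]
      · rw [hc1]; simp only [if_pos rfl]; rfl
      · intro u hu hune
        rw [hc1]
        simp only [if_neg hune, sub_self]
    have := vsub_mem_vectorSpan ℝ hv1 hv2
    rwa [vsub_eq_sub, hdiff] at this
  have hlower : ∑ t ∈ Finset.range n, ((A t).card - 1)
      ≤ Module.finrank ℝ (vectorSpan ℝ (faceOf n k s A)) := by
    have hli : LinearIndependent ℝ
        (fun x : {p // p ∈ Fs} =>
          (Pi.single (x.1.2) 1 : Fin (s * (n - 1) + k) → ℝ) - Pi.single (top x.1.1) 1) := by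
      have h1 : Function.Injective (fun x : {p // p ∈ Fs} => x.1.2) := by
        intro x y hxy
        exact Subtype.ext (hb_inj _ x.2 _ y.2 hxy)
      have h2 : ∀ x : {p // p ∈ Fs}, x.1.2 < top x.1.1 := fun x => hb_lt _ x.2
      exact linearIndependent_triangular (m := s * (n - 1) + k) (ι := {p // p ∈ Fs})
        (fun x => x.1.2) (fun x => top x.1.1) h1 h2
    set S := vectorSpan ℝ (faceOf n k s A) with hS
    let f' : {p // p ∈ Fs} → S := fun x =>
      ⟨(Pi.single (x.1.2) 1 : Fin (s * (n - 1) + k) → ℝ) - Pi.single (top x.1.1) 1,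
        hvecmem _ x.2⟩
    have hli' : LinearIndependent ℝ f' := by
      apply LinearIndependent.of_comp S.subtype
      exact hli
    have hcardle := hli'.fintype_card_le_finrank
    rw [Fintype.card_coe, hFscard] at hcardle
    exact hcardle
  omega

theorem finrank_pool (hn : 1 ≤ n) (hs : 0 < s) (hk : 0 < k) (hks : k ≤ s + 1) :
    Module.finrank ℝ (vectorSpan ℝ (poolPolytope n k s)) = n * (k - 1) := by
  rw [pool_eq_faceOf,
    finrank_faceOf hn hs hk hks (fun t _ => subset_rfl)
      (fun t ht => Wf_nonempty hn hk (Finset.mem_range.mp ht))]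
  rw [Finset.sum_congr rfl fun t ht => by rw [card_Wf hn (Finset.mem_range.mp ht)]]
  simp [mul_comm]


/-! ### the candidate facets -/

variable (n k s) in
def dropF (i0 : ℕ) (j0 : Fin (s * (n - 1) + k)) : ℕ → Finset (Fin (s * (n - 1) + k)) :=
  fun t => if t = i0 then (Wf n k s t).erase j0 else Wf n k s t

theorem dropF_subset {i0 : ℕ} {j0 : Fin (s * (n - 1) + k)} :
    ∀ t ∈ Finset.range n, dropF n k s i0 j0 t ⊆ Wf n k s t := by
  intro t _
  unfold dropF
  split
  · exact Finset.erase_subset _ _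
  · exact subset_rfl

theorem dropF_nonempty (hn : 1 ≤ n) (hk : 1 < k) {i0 : ℕ} {j0 : Fin (s * (n - 1) + k)} :
    ∀ t ∈ Finset.range n, (dropF n k s i0 j0 t).Nonempty := by
  intro t ht
  unfold dropF
  split
  · rw [← Finset.card_pos]
    have h1 : (Wf n k s t).card - 1 ≤ ((Wf n k s t).erase j0).card :=
      Finset.pred_card_le_card_erase
    have h2 : (Wf n k s t).card = k := card_Wf hn (Finset.mem_range.mp ht)
    omega
  · exact Wf_nonempty hn (by omega) (Finset.mem_range.mp ht)

variable (n k s) in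
noncomputable def ℓT (T : Finset (Fin (s * (n - 1) + k))) :
    (Fin (s * (n - 1) + k) → ℝ) →ₗ[ℝ] ℝ :=
  ∑ j ∈ T, LinearMap.proj j

theorem ℓT_E {T : Finset (Fin (s * (n - 1) + k))} {j : Fin (s * (n - 1) + k)} :
    ℓT n k s T (E n k s j) = if j ∈ T then 1 else 0 := by
  rw [ℓT, LinearMap.sum_apply]
  simp only [LinearMap.proj_apply, E]
  rw [Finset.sum_congr rfl (fun j' _ => Pi.single_apply j (1:ℝ) j')]
  exact Finset.sum_ite_eq' T j (fun _ => (1:ℝ))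

theorem ℓT_vtx {T : Finset (Fin (s * (n - 1) + k))} {c : ℕ → Fin (s * (n - 1) + k)} :
    ℓT n k s T (vtx n k s c) = ∑ t ∈ Finset.range n, if c t ∈ T then (1:ℝ) else 0 := by
  rw [vtx, map_sum]
  exact Finset.sum_congr rfl fun t _ => ℓT_E

variable (n k s) in
def minw (hK : 0 < s * (n - 1) + k) (t : ℕ) : Fin (s * (n - 1) + k) :=
  ⟨s * t % (s * (n - 1) + k), Nat.mod_lt _ hK⟩

theorem minw_val (hK : 0 < s * (n - 1) + k) {t : ℕ} (hk : 0 < k) (ht : t < n) :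
    ((minw n k s hK t) : ℕ) = s * t := by
  apply Nat.mod_eq_of_lt
  have := Nat.mul_le_mul_left s (show t ≤ n - 1 by omega)
  omega

theorem minw_mem (hk : 0 < k) {hK : 0 < s * (n - 1) + k} {t : ℕ} (ht : t < n) :
    minw n k s hK t ∈ Wf n k s t := by
  rw [mem_Wf, minw_val hK hk ht]
  omega

variable (n k s) in
def altw (hK : 0 < s * (n - 1) + k) (i0 : ℕ) (j0 : Fin (s * (n - 1) + k)) :
    Fin (s * (n - 1) + k) :=
  if (j0 : ℕ) = s * i0 then ⟨(s * i0 + 1) % (s * (n - 1) + k), Nat.mod_lt _ hK⟩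
  else minw n k s hK i0

theorem altw_val_eq (hK : 0 < s * (n - 1) + k) {i0 : ℕ} {j0 : Fin (s * (n - 1) + k)}
    (hk : 1 < k) (hi0 : i0 < n) (hj : (j0 : ℕ) = s * i0) :
    ((altw n k s hK i0 j0) : ℕ) = s * i0 + 1 := by
  rw [altw, if_pos hj]
  apply Nat.mod_eq_of_lt
  have := Nat.mul_le_mul_left s (show i0 ≤ n - 1 by omega)
  omega

theorem altw_val_ne (hK : 0 < s * (n - 1) + k) {i0 : ℕ} {j0 : Fin (s * (n - 1) + k)}
    (hk : 0 < k) (hi0 : i0 < n) (hj : (j0 : ℕ) ≠ s * i0) :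
    ((altw n k s hK i0 j0) : ℕ) = s * i0 := by
  rw [altw, if_neg hj]
  exact minw_val hK hk hi0

theorem altw_mem (hk : 1 < k) {hK : 0 < s * (n - 1) + k} {i0 : ℕ}
    {j0 : Fin (s * (n - 1) + k)} (hi0 : i0 < n) (hj0 : j0 ∈ Wf n k s i0) :
    altw n k s hK i0 j0 ∈ (Wf n k s i0).erase j0 := by
  obtain ⟨h1, h2⟩ := mem_Wf.mp hj0
  by_cases hj : (j0 : ℕ) = s * i0
  · have hv := altw_val_eq hK hk hi0 hj
    refine Finset.mem_erase.mpr ⟨?_, mem_Wf.mpr ⟨by omega, by omega⟩⟩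
    intro hEq
    rw [hEq] at hv
    omega
  · have hv := altw_val_ne hK (by omega) hi0 hj
    refine Finset.mem_erase.mpr ⟨?_, mem_Wf.mpr ⟨by omega, by omega⟩⟩
    intro hEq
    rw [hEq] at hv
    omega

theorem ℓT_filter_E {P : Fin (s * (n - 1) + k) → Prop} [DecidablePred P]
    {j : Fin (s * (n - 1) + k)} :
    ℓT n k s (Finset.univ.filter P) (E n k s j) = if P j then 1 else 0 := by
  rw [ℓT_E]
  exact if_congr (by simp) rfl rfl

theorem exists_face_functional (hn : 2 ≤ n) (hs : 0 < s) (hk : 1 < k) (hks : k ≤ s + 1)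
    {i0 : ℕ} (hi0 : i0 < n) {j0 : Fin (s * (n - 1) + k)} (hj0 : j0 ∈ Wf n k s i0) :
    ∃ (T : Finset (Fin (s * (n - 1) + k))) (M : ℕ → ℝ),
      (∀ t ∈ Finset.range n, ∀ j ∈ Wf n k s t, ℓT n k s T (E n k s j) ≤ M t) ∧
      (∀ t ∈ Finset.range n, ∀ j ∈ Wf n k s t,
        (j ∈ dropF n k s i0 j0 t ↔ ℓT n k s T (E n k s j) = M t)) ∧
      (∃ d : ℕ → Fin (s * (n - 1) + k),
        (∀ t ∈ Finset.range n, d t ∈ dropF n k s i0 j0 t) ∧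
        ∀ c : ℕ → Fin (s * (n - 1) + k), (∀ t ∈ Finset.range n, c t ∈ Wf n k s t) →
          c i0 = j0 → ℓT n k s T (vtx n k s c) < ℓT n k s T (vtx n k s d)) := by
  classical
  have hK : 0 < s * (n - 1) + k := by omega
  obtain ⟨hj0a, hj0b⟩ := mem_Wf.mp hj0
  set d : ℕ → Fin (s * (n - 1) + k) :=
    fun t => if t = i0 then altw n k s hK i0 j0 else minw n k s hK t with hd
  have hdmem : ∀ t ∈ Finset.range n, d t ∈ dropF n k s i0 j0 t := by
    intro t ht
    rw [hd]; unfold dropF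
    by_cases hti : t = i0
    · subst hti; simp only [if_pos rfl]; exact altw_mem hk hi0 hj0
    · simp only [if_neg hti]; exact minw_mem (by omega) (Finset.mem_range.mp ht)
  have hdi0 : d i0 = altw n k s hK i0 j0 := by rw [hd]; simp
  have hdother : ∀ t, t ≠ i0 → d t = minw n k s hK t := by
    intro t ht; rw [hd]; simp [ht]
  have hmono : ∀ {a b : ℕ}, a ≤ b → s * a ≤ s * b := fun h => Nat.mul_le_mul_left s h
  by_cases hC1 : (j0 : ℕ) = s * i0 ∧ s < k ∧ 0 < i0
  · -- kind 1 : j0 is the left endpoint, shared with window i0 - 1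
    obtain ⟨hq1, hq2, hq3⟩ := hC1
    refine ⟨Finset.univ.filter (fun j => (j0 : ℕ) < (j : ℕ)),
      fun t => if i0 ≤ t then 1 else 0, ?_, ?_, d, hdmem, ?_⟩
    · intro t ht j hj
      obtain ⟨hja, hjb⟩ := mem_Wf.mp hj
      rw [ℓT_filter_E]
      dsimp only
      by_cases hti : i0 ≤ t
      · rw [if_pos hti]; split_ifs <;> norm_num
      · rw [if_neg hti]
        have h3 : s * (t + 1) ≤ s * i0 := hmono (by omega)
        have h4 : s * (t + 1) = s * t + s := by ring
        rw [if_neg (by omega : ¬ (j0 : ℕ) < (j : ℕ))]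
    · intro t ht j hj
      obtain ⟨hja, hjb⟩ := mem_Wf.mp hj
      rw [ℓT_filter_E]
      unfold dropF
      dsimp only
      by_cases hti : t = i0
      · subst hti
        rw [if_pos rfl, if_pos (le_refl t)]
        constructor
        · intro hjd
          obtain ⟨hne, _⟩ := Finset.mem_erase.mp hjd
          have hne' : (j : ℕ) ≠ (j0 : ℕ) := fun h => hne (Fin.ext h)
          rw [if_pos (by omega : (j0 : ℕ) < (j : ℕ))]
        · intro hval
          by_cases hcond : (j0 : ℕ) < (j : ℕ)
          · exact Finset.mem_erase.mpr ⟨fun hE => by rw [hE] at hcond; omega, hj⟩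
          · rw [if_neg hcond] at hval; norm_num at hval
      · rw [if_neg hti]
        rcases Nat.lt_or_ge t i0 with hlt | hge
        · rw [if_neg (by omega : ¬ i0 ≤ t)]
          have h3 : s * (t + 1) ≤ s * i0 := hmono (by omega)
          have h4 : s * (t + 1) = s * t + s := by ring
          rw [if_neg (by omega : ¬ (j0 : ℕ) < (j : ℕ))]
          simp [hj]
        · have hgt : i0 < t := by omega
          rw [if_pos (by omega : i0 ≤ t)]
          have h3 : s * (i0 + 1) ≤ s * t := hmono (by omega)
          have h4 : s * (i0 + 1) = s * i0 + s := by ring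
          rw [if_pos (by omega : (j0 : ℕ) < (j : ℕ))]
          simp [hj]
    · intro c hc hci0
      rw [ℓT_vtx, ℓT_vtx]
      have hnotT : ∀ j : Fin (s * (n - 1) + k),
          ¬ (j0 : ℕ) < (j : ℕ) →
            j ∉ Finset.univ.filter (fun j : Fin (s * (n - 1) + k) => (j0 : ℕ) < (j : ℕ)) := by
        intro j h hmem
        exact h (Finset.mem_filter.mp hmem).2
      have hinT : ∀ j : Fin (s * (n - 1) + k),
          (j0 : ℕ) < (j : ℕ) →
            j ∈ Finset.univ.filter (fun j : Fin (s * (n - 1) + k) => (j0 : ℕ) < (j : ℕ)) :=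
        fun j h => Finset.mem_filter.mpr ⟨Finset.mem_univ _, h⟩
      have hdvi0 : ((d i0 : Fin (s * (n - 1) + k)) : ℕ) = s * i0 + 1 := by
        rw [hdi0]; exact altw_val_eq hK hk hi0 hq1
      refine Finset.sum_lt_sum ?_ ⟨i0, Finset.mem_range.mpr hi0, ?_⟩
      · intro t ht
        by_cases hti : t = i0
        · subst hti
          rw [hci0, if_neg (hnotT j0 (by omega))]
          split_ifs <;> norm_num
        · rcases Nat.lt_or_ge t i0 with hlt | hge
          · have hcw := mem_Wf.mp (hc t ht)
            have h3 : s * (t + 1) ≤ s * i0 := hmono (by omega)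
            have h4 : s * (t + 1) = s * t + s := by ring
            rw [if_neg (hnotT (c t) (by omega))]
            split_ifs <;> norm_num
          · have hgt : i0 < t := by omega
            have h3 : s * (i0 + 1) ≤ s * t := hmono (by omega)
            have h4 : s * (i0 + 1) = s * i0 + s := by ring
            have hdv : ((d t : Fin (s * (n - 1) + k)) : ℕ) = s * t := by
              rw [hdother t hti]; exact minw_val hK (by omega) (Finset.mem_range.mp ht)
            rw [if_pos (hinT (d t) (by omega))]
            split_ifs <;> norm_num
      · rw [hci0, if_neg (hnotT j0 (by omega)),
          if_pos (hinT (d i0) (by omega))]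
        norm_num
  · by_cases hC2 : (j0 : ℕ) = s * i0 + s ∧ s < k ∧ i0 + 1 < n
    · -- kind 2 : j0 is the right endpoint, shared with window i0 + 1
      obtain ⟨hq1, hq2, hq3⟩ := hC2
      refine ⟨Finset.univ.filter (fun j => (j : ℕ) < (j0 : ℕ)),
        fun t => if t ≤ i0 then 1 else 0, ?_, ?_, d, hdmem, ?_⟩
      · intro t ht j hj
        obtain ⟨hja, hjb⟩ := mem_Wf.mp hj
        rw [ℓT_filter_E]
        dsimp only
        by_cases hti : t ≤ i0
        · rw [if_pos hti]; split_ifs <;> norm_num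
        · rw [if_neg hti]
          have h3 : s * (i0 + 1) ≤ s * t := hmono (by omega)
          have h4 : s * (i0 + 1) = s * i0 + s := by ring
          rw [if_neg (by omega : ¬ (j : ℕ) < (j0 : ℕ))]
      · intro t ht j hj
        obtain ⟨hja, hjb⟩ := mem_Wf.mp hj
        rw [ℓT_filter_E]
        unfold dropF
        dsimp only
        by_cases hti : t = i0
        · subst hti
          rw [if_pos rfl, if_pos (le_refl t)]
          constructor
          · intro hjd
            obtain ⟨hne, _⟩ := Finset.mem_erase.mp hjd
            have hne' : (j : ℕ) ≠ (j0 : ℕ) := fun h => hne (Fin.ext h)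
            rw [if_pos (by omega : (j : ℕ) < (j0 : ℕ))]
          · intro hval
            by_cases hcond : (j : ℕ) < (j0 : ℕ)
            · exact Finset.mem_erase.mpr ⟨fun hE => by rw [hE] at hcond; omega, hj⟩
            · rw [if_neg hcond] at hval; norm_num at hval
        · rw [if_neg hti]
          rcases Nat.lt_or_ge t i0 with hlt | hge
          · rw [if_pos (by omega : t ≤ i0)]
            have h3 : s * (t + 1) ≤ s * i0 := hmono (by omega)
            have h4 : s * (t + 1) = s * t + s := by ring
            rw [if_pos (by omega : (j : ℕ) < (j0 : ℕ))]
            simp [hj]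
          · have hgt : i0 < t := by omega
            rw [if_neg (by omega : ¬ t ≤ i0)]
            have h3 : s * (i0 + 1) ≤ s * t := hmono (by omega)
            have h4 : s * (i0 + 1) = s * i0 + s := by ring
            rw [if_neg (by omega : ¬ (j : ℕ) < (j0 : ℕ))]
            simp [hj]
      · intro c hc hci0
        rw [ℓT_vtx, ℓT_vtx]
        have hnotT : ∀ j : Fin (s * (n - 1) + k),
            ¬ (j : ℕ) < (j0 : ℕ) →
              j ∉ Finset.univ.filter (fun j : Fin (s * (n - 1) + k) => (j : ℕ) < (j0 : ℕ)) := by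
          intro j h hmem
          exact h (Finset.mem_filter.mp hmem).2
        have hinT : ∀ j : Fin (s * (n - 1) + k),
            (j : ℕ) < (j0 : ℕ) →
              j ∈ Finset.univ.filter (fun j : Fin (s * (n - 1) + k) => (j : ℕ) < (j0 : ℕ)) :=
          fun j h => Finset.mem_filter.mpr ⟨Finset.mem_univ _, h⟩
        have hdvi0 : ((d i0 : Fin (s * (n - 1) + k)) : ℕ) = s * i0 := by
          rw [hdi0]; exact altw_val_ne hK (by omega) hi0 (by omega)
        refine Finset.sum_lt_sum ?_ ⟨i0, Finset.mem_range.mpr hi0, ?_⟩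
        · intro t ht
          by_cases hti : t = i0
          · subst hti
            rw [hci0, if_neg (hnotT j0 (by omega))]
            split_ifs <;> norm_num
          · rcases Nat.lt_or_ge t i0 with hlt | hge
            · have hdv : ((d t : Fin (s * (n - 1) + k)) : ℕ) = s * t := by
                rw [hdother t hti]; exact minw_val hK (by omega) (Finset.mem_range.mp ht)
              have h3 : s * (t + 1) ≤ s * i0 := hmono (by omega)
              have h4 : s * (t + 1) = s * t + s := by ring
              rw [if_pos (hinT (d t) (by omega))]
              split_ifs <;> norm_num
            · have hgt : i0 < t := by omega
              have hcw := mem_Wf.mp (hc t ht)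
              have h3 : s * (i0 + 1) ≤ s * t := hmono (by omega)
              have h4 : s * (i0 + 1) = s * i0 + s := by ring
              rw [if_neg (hnotT (c t) (by omega))]
              split_ifs <;> norm_num
        · rw [hci0, if_neg (hnotT j0 (by omega)),
            if_pos (hinT (d i0) (by omega))]
          norm_num
    · -- kind 3 : j0 is interior to window i0
      have hint : ∀ t, t < n → t ≠ i0 → j0 ∉ Wf n k s t := by
        intro t htn hne hjt
        rcases Nat.lt_or_ge t i0 with hlt | hge
        · obtain ⟨he1, he2, he3⟩ := wf_overlap hs hks hlt hjt hj0
          have he4 : s * i0 = s * t + s := by rw [he1]; ring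
          exact hC1 ⟨by omega, by omega, by omega⟩
        · have hlt : i0 < t := by omega
          obtain ⟨he1, he2, he3⟩ := wf_overlap hs hks hlt hj0 hjt
          exact hC2 ⟨by omega, by omega, by omega⟩
      refine ⟨Finset.univ.filter (fun j => j ≠ j0), fun _ => 1, ?_, ?_, d, hdmem, ?_⟩
      · intro t ht j hj
        rw [ℓT_filter_E]
        split_ifs <;> norm_num
      · intro t ht j hj
        rw [ℓT_filter_E]
        unfold dropF
        dsimp only
        by_cases hti : t = i0
        · subst hti
          rw [if_pos rfl]
          constructor
          · intro hjd
            rw [if_pos (Finset.mem_erase.mp hjd).1]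
          · intro hval
            by_cases hcond : j ≠ j0
            · exact Finset.mem_erase.mpr ⟨hcond, hj⟩
            · rw [if_neg hcond] at hval; norm_num at hval
        · rw [if_neg hti]
          have hne : j ≠ j0 := by
            intro hE
            exact hint t (Finset.mem_range.mp ht) hti (hE ▸ hj)
          rw [if_pos hne]
          simp [hj]
      · intro c hc hci0
        rw [ℓT_vtx, ℓT_vtx]
        have hinT : ∀ j : Fin (s * (n - 1) + k),
            j ≠ j0 → j ∈ Finset.univ.filter (fun j : Fin (s * (n - 1) + k) => j ≠ j0) :=
          fun j h => Finset.mem_filter.mpr ⟨Finset.mem_univ _, h⟩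
        have hj0notT : j0 ∉ Finset.univ.filter (fun j : Fin (s * (n - 1) + k) => j ≠ j0) := by
          intro hmem
          exact (Finset.mem_filter.mp hmem).2 rfl
        have hdinT : ∀ t ∈ Finset.range n, d t ∈ Finset.univ.filter
            (fun j : Fin (s * (n - 1) + k) => j ≠ j0) := by
          intro t ht
          by_cases hti : t = i0
          · subst hti
            rw [hdi0]
            exact hinT _ (Finset.mem_erase.mp (altw_mem hk hi0 hj0)).1
          · rw [hdother t hti]
            refine hinT _ ?_
            intro hE
            exact hint t (Finset.mem_range.mp ht) hti
              (hE ▸ minw_mem (by omega) (Finset.mem_range.mp ht))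
        refine Finset.sum_lt_sum ?_ ⟨i0, Finset.mem_range.mpr hi0, ?_⟩
        · intro t ht
          rw [if_pos (hdinT t ht)]
          split_ifs <;> norm_num
        · rw [hci0, if_neg hj0notT, if_pos (hdinT i0 (Finset.mem_range.mpr hi0))]
          norm_num

theorem sum_dropF_card (hn : 1 ≤ n) (hk : 1 < k) {i0 : ℕ} (hi0 : i0 < n)
    {j0 : Fin (s * (n - 1) + k)} (hj0 : j0 ∈ Wf n k s i0) :
    ∑ t ∈ Finset.range n, ((dropF n k s i0 j0 t).card - 1) = n * (k - 1) - 1 := by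
  have hmem : i0 ∈ Finset.range n := Finset.mem_range.mpr hi0
  rw [← Finset.add_sum_erase _ _ hmem]
  have h1 : (dropF n k s i0 j0 i0).card = k - 1 := by
    unfold dropF
    rw [if_pos rfl, Finset.card_erase_of_mem hj0, card_Wf hn hi0]
  have h2 : ∀ t ∈ (Finset.range n).erase i0, (dropF n k s i0 j0 t).card - 1 = k - 1 := by
    intro t ht
    obtain ⟨hne, htr⟩ := Finset.mem_erase.mp ht
    unfold dropF
    rw [if_neg hne, card_Wf hn (Finset.mem_range.mp htr)]
  have hcard : ((Finset.range n).erase i0).card = n - 1 := by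
    rw [Finset.card_erase_of_mem hmem, Finset.card_range]
  rw [h1, Finset.sum_congr rfl h2, Finset.sum_const, hcard, smul_eq_mul]
  have e : (n - 1) * (k - 1) = n * (k - 1) - (k - 1) := Nat.sub_one_mul n (k - 1)
  have hge : 1 * (k - 1) ≤ n * (k - 1) := Nat.mul_le_mul_right _ hn
  rw [one_mul] at hge
  omega

theorem isFacet_drop (hn : 2 ≤ n) (hs : 0 < s) (hk : 1 < k) (hks : k ≤ s + 1)
    {i0 : ℕ} (hi0 : i0 < n) {j0 : Fin (s * (n - 1) + k)} (hj0 : j0 ∈ Wf n k s i0) :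
    IsFacetOfPool n k s (faceOf n k s (dropF n k s i0 j0)) := by
  obtain ⟨T, M, hle, hmem, d, hdmem, -⟩ := exists_face_functional hn hs hk hks hi0 hj0
  have hface := face_eq (by omega) (by omega) dropF_subset (dropF_nonempty (by omega) hk)
    hle hmem
  have hdim : Module.finrank ℝ (vectorSpan ℝ (faceOf n k s (dropF n k s i0 j0)))
      = n * (k - 1) - 1 := by
    rw [finrank_faceOf (by omega) hs (by omega) hks dropF_subset (dropF_nonempty (by omega) hk),
      sum_dropF_card (by omega) hk hi0 hj0]
  have hpooldim := finrank_pool (n := n) (k := k) (s := s) (by omega) hs (by omega) hks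
  have hpos : 1 ≤ n * (k - 1) := by
    have := Nat.mul_le_mul (show 1 ≤ n by omega) (show 1 ≤ k - 1 by omega)
    omega
  refine ⟨⟨ℓT n k s T, hface.symm⟩, ⟨vtx n k s d, vtx_mem hdmem⟩, ?_, ?_⟩
  · intro hEQ
    have h := congrArg (fun S => Module.finrank ℝ (vectorSpan ℝ S)) hEQ
    rw [hdim, hpooldim] at h
    omega
  · rw [hdim, hpooldim]

theorem facet_eq_drop (hn : 2 ≤ n) (hs : 0 < s) (hk : 1 < k) (hks : k ≤ s + 1)
    {F : Set (Fin (s * (n - 1) + k) → ℝ)} (hF : IsFacetOfPool n k s F) :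
    ∃ i0, i0 < n ∧ ∃ j0 ∈ Wf n k s i0, F = faceOf n k s (dropF n k s i0 j0) := by
  classical
  obtain ⟨⟨ℓ, hFeq⟩, hne, hFP, hdim⟩ := hF
  set M : ℕ → ℝ := fun t =>
    if h : (Wf n k s t).Nonempty then (Wf n k s t).sup' h (fun j => ℓ (E n k s j)) else 0
    with hM
  set A : ℕ → Finset (Fin (s * (n - 1) + k)) :=
    fun t => (Wf n k s t).filter (fun j => ℓ (E n k s j) = M t) with hA
  have hWne : ∀ t ∈ Finset.range n, (Wf n k s t).Nonempty :=
    fun t ht => Wf_nonempty (by omega) (by omega) (Finset.mem_range.mp ht)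
  have hle : ∀ t ∈ Finset.range n, ∀ j ∈ Wf n k s t, ℓ (E n k s j) ≤ M t := by
    intro t ht j hj
    rw [hM]; dsimp only
    rw [dif_pos (hWne t ht)]
    exact Finset.le_sup' (fun j => ℓ (E n k s j)) hj
  have hAW : ∀ t ∈ Finset.range n, A t ⊆ Wf n k s t := fun t ht => Finset.filter_subset _ _
  have hAne : ∀ t ∈ Finset.range n, (A t).Nonempty := by
    intro t ht
    obtain ⟨j, hj, hjv⟩ := Finset.exists_mem_eq_sup' (hWne t ht) (fun j => ℓ (E n k s j))
    refine ⟨j, ?_⟩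
    rw [hA]; dsimp only
    refine Finset.mem_filter.mpr ⟨hj, ?_⟩
    rw [hM]; dsimp only
    rw [dif_pos (hWne t ht)]
    exact hjv.symm
  have hmem : ∀ t ∈ Finset.range n, ∀ j ∈ Wf n k s t,
      (j ∈ A t ↔ ℓ (E n k s j) = M t) := by
    intro t ht j hj
    rw [hA]; dsimp only
    rw [Finset.mem_filter]
    exact ⟨fun h => h.2, fun h => ⟨hj, h⟩⟩
  have hFA : F = faceOf n k s A := by
    rw [hFeq]; exact face_eq (by omega) (by omega) hAW hAne hle hmem
  have hpooldim := finrank_pool (n := n) (k := k) (s := s) (by omega) hs (by omega) hks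
  rw [hFA, finrank_faceOf (by omega) hs (by omega) hks hAW hAne, hpooldim] at hdim
  have hcardle : ∀ t ∈ Finset.range n, (A t).card ≤ k := by
    intro t ht
    calc (A t).card ≤ (Wf n k s t).card := Finset.card_le_card (hAW t ht)
    _ = k := card_Wf (by omega) (Finset.mem_range.mp ht)
  have hcardpos : ∀ t ∈ Finset.range n, 1 ≤ (A t).card :=
    fun t ht => Finset.card_pos.mpr (hAne t ht)
  have hnk1 : 1 ≤ n * (k - 1) := by
    have := Nat.mul_le_mul (show 1 ≤ n by omega) (show 1 ≤ k - 1 by omega)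
    omega
  have hsum1 : ∑ t ∈ Finset.range n, (k - (A t).card) = 1 := by
    have h1 : ∑ t ∈ Finset.range n, ((A t).card - 1) + ∑ t ∈ Finset.range n, (k - (A t).card)
        = ∑ t ∈ Finset.range n, (k - 1) := by
      rw [← Finset.sum_add_distrib]
      refine Finset.sum_congr rfl fun t ht => ?_
      have h2 := hcardle t ht
      have h3 := hcardpos t ht
      omega
    have h2 : ∑ t ∈ Finset.range n, (k - 1) = n * (k - 1) := by
      rw [Finset.sum_const, Finset.card_range, smul_eq_mul]
    omega
  obtain ⟨i0, hi0r, hi0ne⟩ : ∃ i0 ∈ Finset.range n, k - (A i0).card ≠ 0 := by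
    by_contra hcon
    push_neg at hcon
    have h0 : ∑ t ∈ Finset.range n, (k - (A t).card) = 0 := Finset.sum_eq_zero hcon
    omega
  have hsplit : (k - (A i0).card) + ∑ t ∈ (Finset.range n).erase i0, (k - (A t).card)
      = ∑ t ∈ Finset.range n, (k - (A t).card) :=
    Finset.add_sum_erase (Finset.range n) (fun t => k - (A t).card) hi0r
  have hzero : ∑ t ∈ (Finset.range n).erase i0, (k - (A t).card) = 0 := by omega
  have hrest0 : ∀ t ∈ (Finset.range n).erase i0, k - (A t).card = 0 :=
    Finset.sum_eq_zero_iff.mp hzero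
  have hAi0card : (A i0).card = k - 1 := by
    have h1 := hcardle i0 hi0r
    have h2 := hcardpos i0 hi0r
    have h3 : k - (A i0).card = 1 := by omega
    omega
  have hsd : ((Wf n k s i0) \ (A i0)).card = 1 := by
    rw [Finset.card_sdiff_of_subset (hAW i0 hi0r), card_Wf (by omega) (Finset.mem_range.mp hi0r),
      hAi0card]
    omega
  obtain ⟨j0, hj0s⟩ := Finset.card_eq_one.mp hsd
  have hj0mem : j0 ∈ Wf n k s i0 ∧ j0 ∉ A i0 := by
    have hj0' : j0 ∈ (Wf n k s i0) \ (A i0) := by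
      rw [hj0s]; exact Finset.mem_singleton_self _
    exact ⟨(Finset.mem_sdiff.mp hj0').1, (Finset.mem_sdiff.mp hj0').2⟩
  have hAi0 : A i0 = (Wf n k s i0).erase j0 := by
    refine Finset.eq_of_subset_of_card_le ?_ ?_
    · intro j hj
      refine Finset.mem_erase.mpr ⟨?_, hAW i0 hi0r hj⟩
      intro hE
      exact hj0mem.2 (hE ▸ hj)
    · rw [Finset.card_erase_of_mem hj0mem.1,
        card_Wf (by omega) (Finset.mem_range.mp hi0r), hAi0card]
  have hAt : ∀ t ∈ Finset.range n, t ≠ i0 → A t = Wf n k s t := by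
    intro t ht htne
    have h0 : k - (A t).card = 0 := hrest0 t (Finset.mem_erase.mpr ⟨htne, ht⟩)
    have h1 := hcardle t ht
    refine (Finset.eq_of_subset_of_card_le (hAW t ht) ?_)
    rw [card_Wf (by omega) (Finset.mem_range.mp ht)]
    omega
  refine ⟨i0, Finset.mem_range.mp hi0r, j0, hj0mem.1, ?_⟩
  rw [hFA]
  unfold faceOf
  refine Finset.sum_congr rfl fun t ht => ?_
  unfold dropF
  by_cases hti : t = i0
  · subst hti
    rw [if_pos rfl, hAi0]
  · rw [if_neg hti, hAt t ht hti]

theorem drop_inj (hn : 2 ≤ n) (hs : 0 < s) (hk : 1 < k) (hks : k ≤ s + 1)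
    {i0 i1 : ℕ} {j0 j1 : Fin (s * (n - 1) + k)}
    (hi0 : i0 < n) (hj0 : j0 ∈ Wf n k s i0) (hi1 : i1 < n) (hj1 : j1 ∈ Wf n k s i1)
    (hne : ¬ (i0 = i1 ∧ j0 = j1))
    (heq : faceOf n k s (dropF n k s i0 j0) = faceOf n k s (dropF n k s i1 j1)) : False := by
  classical
  have hK : 0 < s * (n - 1) + k := by omega
  obtain ⟨T, M, hle, hmem, d, hdmem, hstrict⟩ := exists_face_functional hn hs hk hks hi1 hj1
  have hface := face_eq (by omega) (by omega) dropF_subset (dropF_nonempty (by omega) hk)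
    hle hmem
  set c : ℕ → Fin (s * (n - 1) + k) :=
    fun t => if t = i1 then j1 else if t = i0 then altw n k s hK i0 j0 else minw n k s hK t
    with hc
  have hcmem : ∀ t ∈ Finset.range n, c t ∈ dropF n k s i0 j0 t := by
    intro t ht
    rw [hc]; unfold dropF; dsimp only
    by_cases ht1 : t = i1
    · rw [if_pos ht1]
      by_cases ht0 : t = i0
      · rw [if_pos ht0]
        refine Finset.mem_erase.mpr ⟨?_, ?_⟩
        · intro hE
          exact hne ⟨by omega, hE.symm⟩
        · rw [ht1]; exact hj1
      · rw [if_neg ht0, ht1]; exact hj1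
    · rw [if_neg ht1]
      by_cases ht0 : t = i0
      · rw [if_pos ht0, if_pos ht0, ht0]
        exact altw_mem hk hi0 hj0
      · rw [if_neg ht0, if_neg ht0]
        exact minw_mem (by omega) (Finset.mem_range.mp ht)
  have hcW : ∀ t ∈ Finset.range n, c t ∈ Wf n k s t :=
    fun t ht => dropF_subset t ht (hcmem t ht)
  have hv : vtx n k s c ∈ faceOf n k s (dropF n k s i0 j0) := vtx_mem hcmem
  have hv1 : vtx n k s c ∈ faceOf n k s (dropF n k s i1 j1) := heq ▸ hv
  rw [← hface] at hv1
  obtain ⟨hvP, hvmax⟩ := hv1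
  have hwP : vtx n k s d ∈ poolPolytope n k s := by
    rw [pool_eq_faceOf]
    exact faceOf_subset dropF_subset (vtx_mem hdmem)
  have hle' := hvmax (vtx n k s d) hwP
  have hci1 : c i1 = j1 := by rw [hc]; simp
  have hlt := hstrict c hcW hci1
  linarith

end PoolAux

/-- for `1 < k ≤ s+1`, the polytope `P_{n,k,s}` has `k·n` facets. -/
theorem card_facets_small_window (n k s : ℕ) (hn : 2 ≤ n) (hs : 0 < s)
    (hk : 1 < k) (hks : k ≤ s + 1) :
    Nat.card {F : Set (Fin (s * (n - 1) + k) → ℝ) // IsFacetOfPool n k s F} = k * n := by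
  classical
  have hb : ∀ p : Fin n × Fin k, s * (p.1 : ℕ) + (p.2 : ℕ) < s * (n - 1) + k := by
    intro p
    have h1 : s * (p.1 : ℕ) ≤ s * (n - 1) := Nat.mul_le_mul_left s (by omega)
    have h2 := p.2.2
    omega
  have hjof : ∀ p : Fin n × Fin k,
      (⟨s * (p.1 : ℕ) + (p.2 : ℕ), hb p⟩ : Fin (s * (n - 1) + k))
        ∈ PoolAux.Wf n k s (p.1 : ℕ) := by
    intro p
    rw [PoolAux.mem_Wf]
    have h2 := p.2.2
    refine ⟨?_, ?_⟩
    · show s * (p.1 : ℕ) ≤ s * (p.1 : ℕ) + (p.2 : ℕ)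
      omega
    · show s * (p.1 : ℕ) + (p.2 : ℕ) < s * (p.1 : ℕ) + k
      omega
  let G : Fin n × Fin k → {F : Set (Fin (s * (n - 1) + k) → ℝ) // IsFacetOfPool n k s F} :=
    fun p =>
      ⟨PoolAux.faceOf n k s
        (PoolAux.dropF n k s (p.1 : ℕ) ⟨s * (p.1 : ℕ) + (p.2 : ℕ), hb p⟩),
        PoolAux.isFacet_drop hn hs hk hks p.1.2 (hjof p)⟩
  have hGbij : Function.Bijective G := by
    constructor
    · intro p p' hpp
      have heq := congrArg Subtype.val hpp
      simp only [G] at heq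
      by_contra hnep
      refine PoolAux.drop_inj hn hs hk hks p.1.2 (hjof p) p'.1.2 (hjof p') ?_ heq
      rintro ⟨h1, h2⟩
      apply hnep
      have h2v : s * (p.1 : ℕ) + (p.2 : ℕ) = s * (p'.1 : ℕ) + (p'.2 : ℕ) :=
        congrArg Fin.val h2
      have h1v : (p.1 : ℕ) = (p'.1 : ℕ) := h1
      have h3 : s * (p.1 : ℕ) = s * (p'.1 : ℕ) := by rw [h1v]
      have h4 : (p.2 : ℕ) = (p'.2 : ℕ) := by omega
      exact Prod.ext (Fin.ext h1v) (Fin.ext h4)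
    · rintro ⟨F, hF⟩
      obtain ⟨i0, hi0, j0, hj0, hFe⟩ := PoolAux.facet_eq_drop hn hs hk hks hF
      obtain ⟨hj0a, hj0b⟩ := PoolAux.mem_Wf.mp hj0
      refine ⟨(⟨i0, hi0⟩, ⟨(j0 : ℕ) - s * i0, by omega⟩), ?_⟩
      apply Subtype.ext
      simp only [G]
      have hjeq : ∀ jj : Fin (s * (n - 1) + k), (jj : ℕ) = (j0 : ℕ) →
          PoolAux.faceOf n k s (PoolAux.dropF n k s i0 jj) = F := by
        intro jj hjj
        rw [hFe]
        exact congrArg (PoolAux.faceOf n k s)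
          (congrArg (PoolAux.dropF n k s i0) (Fin.ext hjj))
      exact hjeq _ (by show s * i0 + ((j0 : ℕ) - s * i0) = (j0 : ℕ); omega)
  have hcard := Nat.card_eq_of_bijective G hGbij
  rw [← hcard, Nat.card_eq_fintype_card, Fintype.card_prod, Fintype.card_fin, Fintype.card_fin,
    Nat.mul_comm]
end
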